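/- arXiv:2303.06838 — 6 statements merged into one kernel-verified Lean document; each statement's English description precedes it below -/
import Mathlib

section
/- Let l ≥ 1 and n ≥ l be integers. Then the probability that the one-sided random walk visits state l within its first n steps satisfies P(N(l, n) > 0) ≤ (n − l + 1) · ((1 − q/p)/(1 − (q/p)^{l+1})) · (q/p)^{l} + (2√(pq)/(1 − 2√(pq))²) · (2q)^{l}. -/
/-!
Write `r = q / p` and let `S` be the free `±1` walk driven by the same steps, with running
maximum `M`. By Lindley's identity `Z_k = S_k - min_{j ≤ k} S_j`, reversing the first `k` steps
turns `Z_k` into `M_k`, so `P(Z_k = l) = P(M_k ≥ l) - P(M_k ≥ l + 1)`. Optional stopping of the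
martingale `(p/q)^{S_k}` at the first passage to level `a` gives `P(M_k ≥ a) ≤ r^a`. On the paths
that have not reached `a`, `(p/q)^{S_k} ≤ θ^{a-1} θ^{S_k}` with `θ = √(p/q)`, and
`E θ^{S_k} = (2√(pq))^k`, whence `P(M_k ≥ a) ≥ r^a (1 - θ^{a-1} (2√(pq))^k)`. The resulting bound
on `P(Z_k = l)` is summed over `l ≤ k ≤ n`, the last term being a geometric series.
-/

open Finset MeasureTheory ProbabilityTheory

namespace OneSidedWalk

def step (b : Bool) : ℤ := if b then 1 else -1

def walk (b : ℕ → Bool) : ℕ → ℤ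
  | 0 => 0
  | k + 1 => walk b k + step (b k)

def runMax (b : ℕ → Bool) : ℕ → ℤ
  | 0 => 0
  | k + 1 => max (runMax b k) (walk b (k + 1))

def runMin (b : ℕ → Bool) : ℕ → ℤ
  | 0 => 0
  | k + 1 => min (runMin b k) (walk b (k + 1))

/-- Truncated subtraction on `ℕ` is the reflection at `0`. -/
def reflWalk (b : ℕ → Bool) : ℕ → ℕ
  | 0 => 0
  | k + 1 => if b k then reflWalk b k + 1 else reflWalk b k - 1

section Paths

variable {b c : ℕ → Bool} {k t : ℕ}

lemma walk_congr (h : ∀ i < k, b i = c i) : walk b k = walk c k := by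
  induction k with
  | zero => rfl
  | succ k ih => rw [walk, walk, ih fun i hi => h i (by omega), h k k.lt_succ_self]

lemma runMax_congr (h : ∀ i < k, b i = c i) : runMax b k = runMax c k := by
  induction k with
  | zero => rfl
  | succ k ih => rw [runMax, runMax, ih fun i hi => h i (by omega), walk_congr h]

lemma reflWalk_congr (h : ∀ i < k, b i = c i) : reflWalk b k = reflWalk c k := by
  induction k with
  | zero => rfl
  | succ k ih => rw [reflWalk, reflWalk, ih fun i hi => h i (by omega), h k k.lt_succ_self]

lemma reflWalk_le_self (b : ℕ → Bool) (k : ℕ) : reflWalk b k ≤ k := by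
  induction k with
  | zero => rfl
  | succ k ih => rw [reflWalk]; split <;> omega

lemma runMin_le_walk (h : t ≤ k) : runMin b k ≤ walk b t := by
  induction k with
  | zero => rw [Nat.le_zero.1 h]; rfl
  | succ k ih =>
    rcases h.lt_or_eq with h | rfl
    · exact (min_le_left _ _).trans (ih (by omega))
    · exact min_le_right _ _

lemma walk_le_runMax (h : t ≤ k) : walk b t ≤ runMax b k := by
  induction k with
  | zero => rw [Nat.le_zero.1 h]; rfl
  | succ k ih =>
    rcases h.lt_or_eq with h | rfl
    · exact (ih (by omega)).trans (le_max_left _ _)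
    · exact le_max_right _ _

lemma exists_runMin_eq (b : ℕ → Bool) (k : ℕ) : ∃ t ≤ k, runMin b k = walk b t := by
  induction k with
  | zero => exact ⟨0, le_rfl, rfl⟩
  | succ k ih =>
    obtain ⟨t, ht, he⟩ := ih
    rcases min_choice (runMin b k) (walk b (k + 1)) with h | h
    · exact ⟨t, by omega, by rw [runMin, h, he]⟩
    · exact ⟨k + 1, le_rfl, by rw [runMin, h]⟩

lemma exists_runMax_eq (b : ℕ → Bool) (k : ℕ) : ∃ t ≤ k, runMax b k = walk b t := by
  induction k with
  | zero => exact ⟨0, le_rfl, rfl⟩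
  | succ k ih =>
    obtain ⟨t, ht, he⟩ := ih
    rcases max_choice (runMax b k) (walk b (k + 1)) with h | h
    · exact ⟨t, by omega, by rw [runMax, h, he]⟩
    · exact ⟨k + 1, le_rfl, by rw [runMax, h]⟩

/-- Lindley's identity. -/
lemma reflWalk_eq_walk_sub_runMin (b : ℕ → Bool) (k : ℕ) :
    (reflWalk b k : ℤ) = walk b k - runMin b k := by
  induction k with
  | zero => rfl
  | succ k ih =>
    have hmin : runMin b k ≤ walk b k := runMin_le_walk le_rfl
    rw [reflWalk, runMin, walk]
    cases b k <;> simp only [step, Bool.false_eq_true, if_true, if_false] <;> omega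

def reverse (k : ℕ) (b : ℕ → Bool) : ℕ → Bool := fun i => b (k - 1 - i)

lemma walk_reverse (h : t ≤ k) : walk (reverse k b) t = walk b k - walk b (k - t) := by
  induction t with
  | zero => simp [walk]
  | succ t ih =>
    have hkt : k - t = k - (t + 1) + 1 := by omega
    rw [walk, ih (by omega), hkt, walk, reverse, show k - 1 - t = k - (t + 1) by omega]
    ring

lemma reflWalk_reverse (b : ℕ → Bool) (k : ℕ) : (reflWalk (reverse k b) k : ℤ) = runMax b k := by
  have hmin : runMin (reverse k b) k = walk b k - runMax b k := by
    apply le_antisymm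
    · obtain ⟨t, ht, hmax⟩ := exists_runMax_eq b k
      have := runMin_le_walk (b := reverse k b) (Nat.sub_le k t)
      rwa [walk_reverse (Nat.sub_le k t), Nat.sub_sub_self ht, ← hmax] at this
    · obtain ⟨t, ht, hmin⟩ := exists_runMin_eq (reverse k b) k
      rw [hmin, walk_reverse ht]
      linarith [walk_le_runMax (b := b) (Nat.sub_le k t)]
  rw [reflWalk_eq_walk_sub_runMin, hmin, walk_reverse le_rfl, Nat.sub_self]
  simp [walk]

end Paths

section FinitePaths

variable {k : ℕ}

def pad (v : Fin k → Bool) : ℕ → Bool := fun i => if h : i < k then v ⟨i, h⟩ else false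

lemma pad_of_lt (v : Fin k → Bool) {i : ℕ} (h : i < k) : pad v i = v ⟨i, h⟩ := dif_pos h

lemma pad_snoc_of_lt (w : Fin k → Bool) (b : Bool) {i : ℕ} (h : i < k) :
    pad (Fin.snoc w b) i = pad w i := by
  rw [pad_of_lt _ (by omega), pad_of_lt _ h]
  exact Fin.snoc_castSucc (α := fun _ => Bool) (i := ⟨i, h⟩) ..

lemma pad_snoc_last (w : Fin k → Bool) (b : Bool) : pad (Fin.snoc w b) k = b := by
  rw [pad_of_lt _ k.lt_succ_self]
  exact Fin.snoc_last (α := fun _ => Bool) ..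

lemma walk_pad_snoc (w : Fin k → Bool) (b : Bool) :
    walk (pad (Fin.snoc w b)) (k + 1) = walk (pad w) k + step b := by
  rw [walk, walk_congr fun i hi => pad_snoc_of_lt w b hi, pad_snoc_last]

lemma runMax_pad_snoc (w : Fin k → Bool) (b : Bool) :
    runMax (pad (Fin.snoc w b)) (k + 1) = max (runMax (pad w) k) (walk (pad w) k + step b) := by
  rw [runMax, runMax_congr fun i hi => pad_snoc_of_lt w b hi, walk_pad_snoc]

lemma sum_pi_fin_succ {M : Type*} [AddCommMonoid M] (F : (Fin (k + 1) → Bool) → M) :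
    ∑ v, F v = ∑ w : Fin k → Bool, ∑ b, F (Fin.snoc w b) := by
  rw [← (Fin.snocEquiv fun _ => Bool).sum_comp F, Fintype.sum_prod_type, Finset.sum_comm]
  rfl

lemma zpow_walk_pad {θ : ℝ} (hθ : θ ≠ 0) (v : Fin k → Bool) :
    θ ^ walk (pad v) k = ∏ i, θ ^ step (v i) := by
  have h : ∀ (b : ℕ → Bool) (k : ℕ), θ ^ walk b k = ∏ i ∈ range k, θ ^ step (b i) := by
    intro b k
    induction k with
    | zero => simp [walk]
    | succ k ih => rw [walk, zpow_add₀ hθ, ih, prod_range_succ]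
  rw [h, ← Fin.prod_univ_eq_prod_range]
  simp only [pad_of_lt _ (Fin.is_lt _)]

end FinitePaths

section Weights

variable {p q θ : ℝ} {k : ℕ}

def stepWeight (p q : ℝ) (b : Bool) : ℝ := if b then q else p

def pathWeight (p q : ℝ) (v : Fin k → Bool) : ℝ := ∏ i, stepWeight p q (v i)

lemma stepWeight_nonneg (hp : 0 ≤ p) (hq : 0 ≤ q) (b : Bool) : 0 ≤ stepWeight p q b := by
  cases b <;> assumption

lemma pathWeight_nonneg (hp : 0 ≤ p) (hq : 0 ≤ q) (v : Fin k → Bool) : 0 ≤ pathWeight p q v :=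
  prod_nonneg fun _ _ => stepWeight_nonneg hp hq _

lemma pathWeight_snoc (w : Fin k → Bool) (b : Bool) :
    pathWeight p q (Fin.snoc w b) = pathWeight p q w * stepWeight p q b := by
  simp only [pathWeight, Fin.prod_univ_castSucc, Fin.snoc_castSucc, Fin.snoc_last]

lemma pathWeight_comp_rev (v : Fin k → Bool) : pathWeight p q (v ∘ Fin.rev) = pathWeight p q v :=
  Fintype.prod_equiv Fin.revPerm _ _ fun _ => rfl

lemma sum_stepWeight (hpq : p + q = 1) : ∑ b, stepWeight p q b = 1 := by
  simp [stepWeight, add_comm q p, hpq]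

lemma sum_stepWeight_mul_zpow_step :
    ∑ b, stepWeight p q b * θ ^ step b = q * θ + p * θ⁻¹ := by
  simp [stepWeight, step]

lemma sum_pathWeight_mul_zpow_walk (hθ : θ ≠ 0) (k : ℕ) :
    ∑ v : Fin k → Bool, pathWeight p q v * θ ^ walk (pad v) k = (q * θ + p * θ⁻¹) ^ k := by
  simp only [pathWeight, zpow_walk_pad hθ, ← prod_mul_distrib]
  rw [← sum_stepWeight_mul_zpow_step, Fintype.sum_pow]

end Weights

section OptionalStopping

variable {p q θ : ℝ} {k : ℕ}

/-- `θ ^ S_{min k τ}` for the first passage time `τ` of `S` to level `a`, where `S_τ = a`. -/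
noncomputable def stoppedZpow (θ : ℝ) (a : ℕ) (b : ℕ → Bool) (k : ℕ) : ℝ :=
  if (a : ℤ) ≤ runMax b k then θ ^ a else θ ^ walk b k

lemma stoppedZpow_pad_snoc_of_not_le {a : ℕ} (hθ : θ ≠ 0) (w : Fin k → Bool) (b : Bool)
    (hM : ¬ (a : ℤ) ≤ runMax (pad w) k) :
    stoppedZpow θ a (pad (Fin.snoc w b)) (k + 1) = θ ^ walk (pad w) k * θ ^ step b := by
  rw [stoppedZpow, runMax_pad_snoc, walk_pad_snoc, zpow_add₀ hθ]
  split_ifs with h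
  · -- steps have size one, so the level is hit exactly
    have hS := walk_le_runMax (b := pad w) (le_refl k)
    have : walk (pad w) k + step b = a := by cases b <;> simp only [step] at h ⊢ <;> omega
    rw [← zpow_add₀ hθ, this, zpow_natCast]
  · rfl

lemma sum_stepWeight_mul_stoppedZpow_pad_snoc (hpq : p + q = 1) (hθ : θ ≠ 0)
    (hmart : q * θ + p * θ⁻¹ = 1) (a : ℕ) (w : Fin k → Bool) :
    ∑ b, stepWeight p q b * stoppedZpow θ a (pad (Fin.snoc w b)) (k + 1) =
      stoppedZpow θ a (pad w) k := by
  by_cases hM : (a : ℤ) ≤ runMax (pad w) k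
  · have h b : stoppedZpow θ a (pad (Fin.snoc w b)) (k + 1) = θ ^ a := by
      rw [stoppedZpow, runMax_pad_snoc, if_pos (hM.trans (le_max_left _ _))]
    simp only [h]
    rw [← sum_mul, sum_stepWeight hpq, one_mul, stoppedZpow, if_pos hM]
  · simp only [stoppedZpow_pad_snoc_of_not_le hθ w _ hM, mul_left_comm _ (θ ^ walk (pad w) k)]
    rw [← mul_sum, sum_stepWeight_mul_zpow_step, hmart, mul_one, stoppedZpow, if_neg hM]

theorem sum_pathWeight_mul_stoppedZpow (hpq : p + q = 1) (hθ : θ ≠ 0)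
    (hmart : q * θ + p * θ⁻¹ = 1) (a k : ℕ) :
    ∑ v : Fin k → Bool, pathWeight p q v * stoppedZpow θ a (pad v) k = 1 := by
  induction k with
  | zero => rcases a with _ | a <;> simp [stoppedZpow, runMax, walk, pathWeight]
  | succ k ih =>
    rw [sum_pi_fin_succ, ← ih]
    refine sum_congr rfl fun w _ => ?_
    simp only [pathWeight_snoc, mul_assoc, ← mul_sum,
      sum_stepWeight_mul_stoppedZpow_pad_snoc hpq hθ hmart]

end OptionalStopping

section PathProb

variable {p q : ℝ} {k : ℕ}

/-- The probability of an event determined by the first `k` steps. -/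
def pathProb (p q : ℝ) (k : ℕ) (P : (ℕ → Bool) → Prop) [DecidablePred P] : ℝ :=
  ∑ v : Fin k → Bool with P (pad v), pathWeight p q v

lemma pathProb_nonneg (hp : 0 ≤ p) (hq : 0 ≤ q) (P : (ℕ → Bool) → Prop) [DecidablePred P] :
    0 ≤ pathProb p q k P :=
  sum_nonneg fun v _ => pathWeight_nonneg hp hq v

lemma div_pow_mul_pathProb_le_runMax_add_eq_one (hp : 0 < p) (hq : 0 < q) (hpq : p + q = 1) (a k : ℕ) :
    (p / q) ^ a * pathProb p q k (fun b => (a : ℤ) ≤ runMax b k) +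
        ∑ v : Fin k → Bool with ¬ (a : ℤ) ≤ runMax (pad v) k,
          pathWeight p q v * (p / q) ^ walk (pad v) k = 1 := by
  have hmart : q * (p / q) + p * (p / q)⁻¹ = 1 := by field_simp; linarith
  rw [← sum_pathWeight_mul_stoppedZpow hpq (by positivity) hmart a k]
  simp only [stoppedZpow, mul_ite, sum_ite, pathProb, mul_sum, mul_comm]

lemma pathProb_le_runMax_le (hp : 0 < p) (hq : 0 < q) (hpq : p + q = 1) (a k : ℕ) :
    pathProb p q k (fun b => (a : ℤ) ≤ runMax b k) ≤ (q / p) ^ a := by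
  have h := div_pow_mul_pathProb_le_runMax_add_eq_one hp hq hpq a k
  have hrest : 0 ≤ ∑ v : Fin k → Bool with ¬ (a : ℤ) ≤ runMax (pad v) k,
      pathWeight p q v * (p / q) ^ walk (pad v) k :=
    sum_nonneg fun v _ => mul_nonneg (pathWeight_nonneg hp.le hq.le v) (by positivity)
  set P := pathProb p q k (fun b => (a : ℤ) ≤ runMax b k)
  calc P = (q / p) ^ a * ((p / q) ^ a * P) := by
        rw [← inv_div, inv_pow, inv_mul_cancel_left₀ (by positivity)]
    _ ≤ (q / p) ^ a := mul_le_of_le_one_right (by positivity) (by linarith)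

lemma sum_pathWeight_mul_zpow_walk_of_runMax_lt (hp : 0 < p) (hq : 0 < q) {θ : ℝ} (hθ : 0 < θ)
    (hθpq : θ ≤ p / q) (a k : ℕ) :
    ∑ v : Fin k → Bool with ¬ ((a + 1 : ℕ) : ℤ) ≤ runMax (pad v) k,
        pathWeight p q v * (p / q) ^ walk (pad v) k ≤
      (p / q / θ) ^ a * (q * θ + p * θ⁻¹) ^ k := by
  have hρ : 1 ≤ p / q / θ := (one_le_div hθ).2 hθpq
  rw [← sum_pathWeight_mul_zpow_walk hθ.ne', mul_sum]
  refine (sum_le_sum fun v hv => ?_).trans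
    (sum_le_sum_of_subset_of_nonneg (filter_subset _ _) fun v _ _ => ?_)
  · have hS : walk (pad v) k ≤ a := by
      have := walk_le_runMax (b := pad v) (le_refl k)
      simp only [mem_filter] at hv
      omega
    calc pathWeight p q v * (p / q) ^ walk (pad v) k
        = pathWeight p q v * ((p / q / θ) ^ walk (pad v) k * θ ^ walk (pad v) k) := by
          rw [← mul_zpow, div_mul_cancel₀ _ hθ.ne']
      _ ≤ pathWeight p q v * ((p / q / θ) ^ (a : ℤ) * θ ^ walk (pad v) k) := by
          gcongr
          exact pathWeight_nonneg hp.le hq.le v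
      _ = (p / q / θ) ^ a * (pathWeight p q v * θ ^ walk (pad v) k) := by
          rw [zpow_natCast]
          ring
  · exact mul_nonneg (by positivity) (mul_nonneg (pathWeight_nonneg hp.le hq.le v) (by positivity))

/-- The choice `θ = √(p/q)` minimising `q θ + p θ⁻¹` gives the sharpest bound. -/
lemma le_pathProb_le_runMax (hp : 0 < p) (hq : 0 < q) (hpq : p + q = 1) {θ : ℝ} (hθ : 0 < θ)
    (hθpq : θ ≤ p / q) (a k : ℕ) :
    (q / p) ^ (a + 1) * (1 - (p / q / θ) ^ a * (q * θ + p * θ⁻¹) ^ k) ≤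
      pathProb p q k (fun b => ((a + 1 : ℕ) : ℤ) ≤ runMax b k) := by
  have h := div_pow_mul_pathProb_le_runMax_add_eq_one hp hq hpq (a + 1) k
  have hrest := sum_pathWeight_mul_zpow_walk_of_runMax_lt hp hq hθ hθpq a k
  set P := pathProb p q k (fun b => ((a + 1 : ℕ) : ℤ) ≤ runMax b k)
  calc (q / p) ^ (a + 1) * (1 - (p / q / θ) ^ a * (q * θ + p * θ⁻¹) ^ k)
      ≤ (q / p) ^ (a + 1) * ((p / q) ^ (a + 1) * P) := by
        gcongr
        linarith
    _ = P := by rw [← inv_div, inv_pow, inv_mul_cancel_left₀ (by positivity)]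

lemma pathProb_runMax_eq_sub (l k : ℕ) :
    pathProb p q k (fun b => runMax b k = l) =
      pathProb p q k (fun b => (l : ℤ) ≤ runMax b k) -
        pathProb p q k (fun b => ((l + 1 : ℕ) : ℤ) ≤ runMax b k) := by
  rw [eq_sub_iff_add_eq, pathProb, pathProb, pathProb, ← sum_union]
  · congr 1
    ext v
    simp only [mem_union, mem_filter, mem_univ, true_and]
    omega
  · exact disjoint_filter.2 fun v _ h1 h2 => by omega

lemma reflWalk_pad_comp_rev (v : Fin k → Bool) :
    (reflWalk (pad (v ∘ Fin.rev)) k : ℤ) = runMax (pad v) k := by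
  rw [← reflWalk_reverse, reflWalk_congr fun i hi => ?_]
  rw [reverse, pad_of_lt _ hi, pad_of_lt _ (by omega)]
  simp only [Function.comp_apply]
  congr 1
  ext
  simp only [Fin.val_rev]
  omega

lemma pathProb_reflWalk_eq_runMax (l k : ℕ) :
    pathProb p q k (fun b => reflWalk b k = l) = pathProb p q k (fun b => runMax b k = l) := by
  simp only [pathProb, sum_filter]
  have hrev : Function.Involutive fun v : Fin k → Bool => v ∘ Fin.rev := fun v => by
    ext
    simp
  refine Fintype.sum_equiv hrev.toPerm _ _ fun v => ?_
  have h := reflWalk_pad_comp_rev (v ∘ Fin.rev)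
  rw [show (v ∘ Fin.rev) ∘ Fin.rev = v from hrev v] at h
  simp only [Function.Involutive.coe_toPerm, pathWeight_comp_rev, ← h, Nat.cast_inj]

end PathProb

section Bounds

variable {p q : ℝ}

lemma mul_sqrt_div_add_mul_inv_sqrt_div (hp : 0 < p) (hq : 0 < q) :
    q * √(p / q) + p * (√(p / q))⁻¹ = 2 * √(p * q) := by
  have hp' := Real.sq_sqrt hp.le
  have hq' := Real.sq_sqrt hq.le
  have : 0 < √p := Real.sqrt_pos.2 hp
  have : 0 < √q := Real.sqrt_pos.2 hq
  rw [Real.sqrt_div hp.le, Real.sqrt_mul hp.le]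
  field_simp
  rw [hp', hq']
  ring

lemma two_mul_sqrt_mul_lt_one (hpq : p + q = 1) (hne : q ≠ p) : 2 * √(p * q) < 1 := by
  have : p * q < (1 / 2) ^ 2 := by nlinarith [sq_pos_of_ne_zero (sub_ne_zero.2 hne)]
  linarith [(Real.sqrt_lt' (by norm_num)).2 this]

lemma div_le_two_mul_sqrt_mul (hq : 0 ≤ q) (hqp : q ≤ p) (hpq : p + q = 1) :
    q / p ≤ 2 * √(p * q) := by
  have h1 : q ≤ √(p * q) := Real.le_sqrt_of_sq_le (by nlinarith)
  have h2 : q / p ≤ 2 * q := by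
    rw [div_le_iff₀ (by linarith)]
    nlinarith
  linarith

lemma pathProb_reflWalk_eq_le (hq : 0 < q) (hqp : q < p) (hpq : p + q = 1) (l k : ℕ) :
    pathProb p q k (fun b => reflWalk b k = l) ≤
      (q / p) ^ l - (q / p) ^ (l + 1) + (q / p) ^ (l + 1) * √(p / q) ^ l * (2 * √(p * q)) ^ k := by
  have hp : 0 < p := hq.trans hqp
  have hθ : √(p / q) ≤ p / q := Real.sqrt_le_self_iff.2 (Or.inr ((one_le_div hq).2 hqp.le))
  have hupper := pathProb_le_runMax_le hp hq hpq l k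
  have hlower := le_pathProb_le_runMax hp hq hpq (by positivity) hθ l k
  rw [Real.div_sqrt, mul_sqrt_div_add_mul_inv_sqrt_div hp hq] at hlower
  rw [pathProb_reflWalk_eq_runMax, pathProb_runMax_eq_sub]
  linarith

lemma sum_pathProb_reflWalk_eq_le (hq : 0 < q) (hqp : q < p) (hpq : p + q = 1) {l n : ℕ}
    (hn : l ≤ n) :
    ∑ k ∈ Icc l n, pathProb p q k (fun b => reflWalk b k = l) ≤
      ((n : ℝ) - l + 1) * ((q / p) ^ l - (q / p) ^ (l + 1)) +
        q / p * (2 * q) ^ l / (1 - 2 * √(p * q)) := by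
  have hp : 0 < p := hq.trans hqp
  have hrθx : q / p * (√(p / q) * (2 * √(p * q))) = 2 * q := by
    have hp' := Real.sq_sqrt hp.le
    have : 0 < √p := Real.sqrt_pos.2 hp
    have : 0 < √q := Real.sqrt_pos.2 hq
    rw [Real.sqrt_div hp.le, Real.sqrt_mul hp.le]
    field_simp
    rw [hp']
  have hcard : ((Icc l n).card : ℝ) = n - l + 1 := by
    rw [Nat.card_Icc, Nat.cast_sub (by omega)]
    push_cast
    ring
  set r := q / p
  set θ := √(p / q)
  set x := 2 * √(p * q)
  have hgeom : ∑ k ∈ Icc l n, x ^ k ≤ x ^ l / (1 - x) := by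
    rw [← Ico_add_one_right_eq_Icc]
    exact geom_sum_Ico_le_of_lt_one (by positivity) (two_mul_sqrt_mul_lt_one hpq hqp.ne)
  calc ∑ k ∈ Icc l n, pathProb p q k (fun b => reflWalk b k = l)
      ≤ ∑ k ∈ Icc l n, (r ^ l - r ^ (l + 1) + r ^ (l + 1) * θ ^ l * x ^ k) :=
        sum_le_sum fun k _ => pathProb_reflWalk_eq_le hq hqp hpq l k
    _ = (n - l + 1) * (r ^ l - r ^ (l + 1)) + r ^ (l + 1) * θ ^ l * ∑ k ∈ Icc l n, x ^ k := by
        rw [sum_add_distrib, sum_const, nsmul_eq_mul, hcard, mul_sum]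
    _ ≤ (n - l + 1) * (r ^ l - r ^ (l + 1)) + r ^ (l + 1) * θ ^ l * (x ^ l / (1 - x)) := by
        gcongr
    _ = (n - l + 1) * (r ^ l - r ^ (l + 1)) + r * (2 * q) ^ l / (1 - x) := by
        rw [← hrθx]
        ring

lemma pow_sub_pow_succ_le {r : ℝ} (hr0 : 0 ≤ r) (hr1 : r < 1) (l : ℕ) :
    r ^ l - r ^ (l + 1) ≤ (1 - r) / (1 - r ^ (l + 1)) * r ^ l := by
  have hpow : 0 < 1 - r ^ (l + 1) := by linarith [pow_lt_one₀ hr0 hr1 (by omega : l + 1 ≠ 0)]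
  calc r ^ l - r ^ (l + 1) = (1 - r) / 1 * r ^ l := by ring
    _ ≤ (1 - r) / (1 - r ^ (l + 1)) * r ^ l := by
        gcongr
        linarith [pow_nonneg hr0 (l + 1)]

lemma mul_div_one_sub_le {r x c : ℝ} (hrx : r ≤ x) (hx0 : 0 ≤ x) (hx : x < 1) (hc : 0 ≤ c) :
    r * c / (1 - x) ≤ x / (1 - x) ^ 2 * c := by
  have h1x : 0 < 1 - x := sub_pos.2 hx
  calc r * c / (1 - x) ≤ x * c / (1 - x) := by gcongr
    _ ≤ x * c / (1 - x) ^ 2 := by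
        gcongr
        nlinarith
    _ = x / (1 - x) ^ 2 * c := by ring

end Bounds

section Measure

variable {Ω : Type*} [MeasurableSpace Ω] {μ : Measure Ω} [IsProbabilityMeasure μ]
  {ξ : ℕ → Ω → Bool} {p q : ℝ} {k : ℕ}

lemma measure_preimage_singleton (hpq : p + q = 1) (hq : 0 ≤ q) (hmeas : ∀ j, Measurable (ξ j))
    (hdist : ∀ j, 1 ≤ j → μ {ω | ξ j ω = true} = ENNReal.ofReal q) {j : ℕ} (hj : 1 ≤ j)
    (b : Bool) : μ (ξ j ⁻¹' {b}) = ENNReal.ofReal (stepWeight p q b) := by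
  cases b
  · have hcompl : ξ j ⁻¹' {false} = (ξ j ⁻¹' {true})ᶜ := by
      ext
      simp
    rw [hcompl, prob_compl_eq_one_sub ((hmeas j) (measurableSet_singleton true))]
    change 1 - μ {ω | ξ j ω = true} = _
    rw [hdist j hj, ← ENNReal.ofReal_one, ← ENNReal.ofReal_sub _ hq, stepWeight]
    congr 1
    simp only [Bool.false_eq_true, if_false]
    linarith
  · exact hdist j hj

lemma measure_cylinder (hpq : p + q = 1) (hp : 0 ≤ p) (hq : 0 ≤ q)
    (hmeas : ∀ j, Measurable (ξ j))
    (hindep : iIndepFun ξ μ) (hdist : ∀ j, 1 ≤ j → μ {ω | ξ j ω = true} = ENNReal.ofReal q)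
    (v : Fin k → Bool) :
    μ {ω | ∀ i : Fin k, ξ (i + 1) ω = v i} = ENNReal.ofReal (pathWeight p q v) := by
  have hind := hindep.precomp (g := fun i : Fin k => (i : ℕ) + 1) fun i j h => by
    simpa [Fin.ext_iff] using h
  have hset : {ω | ∀ i : Fin k, ξ (i + 1) ω = v i} =
      ⋂ i ∈ (univ : Finset (Fin k)), (fun ω => ξ (i + 1) ω) ⁻¹' {v i} := by
    ext
    simp
  rw [hset, hind.measure_inter_preimage_eq_mul _ fun i _ => measurableSet_singleton (v i),
    pathWeight, ENNReal.ofReal_prod_of_nonneg fun i _ => stepWeight_nonneg hp hq _]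
  exact prod_congr rfl fun i _ => measure_preimage_singleton hpq hq hmeas hdist (by omega) _

lemma measure_eq_ofReal_pathProb (hpq : p + q = 1) (hp : 0 ≤ p) (hq : 0 ≤ q)
    (hmeas : ∀ j, Measurable (ξ j)) (hindep : iIndepFun ξ μ)
    (hdist : ∀ j, 1 ≤ j → μ {ω | ξ j ω = true} = ENNReal.ofReal q)
    (P : (ℕ → Bool) → Prop) [DecidablePred P] (hP : ∀ b c, (∀ i < k, b i = c i) → P b → P c) :
    μ {ω | P fun i => ξ (i + 1) ω} = ENNReal.ofReal (pathProb p q k P) := by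
  have hset : {ω | P fun i => ξ (i + 1) ω} =
      ⋃ v ∈ univ.filter (fun v : Fin k → Bool => P (pad v)),
        {ω | ∀ i : Fin k, ξ (i + 1) ω = v i} := by
    ext ω
    simp only [Set.mem_ofPred_eq, Set.mem_iUnion, mem_filter, mem_univ, true_and, exists_prop]
    constructor
    · refine fun h => ⟨fun i => ξ (i + 1) ω, hP _ _ (fun i hi => ?_) h, fun _ => rfl⟩
      exact (pad_of_lt (fun i : Fin k => ξ (i + 1) ω) hi).symm
    · rintro ⟨v, hv, hω⟩
      exact hP _ _ (fun i hi => by rw [pad_of_lt _ hi, ← hω]) hv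
  rw [hset, measure_biUnion_finset (fun v _ w _ hvw => ?_) fun v _ => ?_, pathProb,
    ENNReal.ofReal_sum_of_nonneg fun v _ => pathWeight_nonneg hp hq v]
  · exact sum_congr rfl fun v _ => measure_cylinder hpq hp hq hmeas hindep hdist v
  · exact Set.disjoint_left.2 fun ω h1 h2 => hvw (funext fun i => (h1 i).symm.trans (h2 i))
  · simp only [Set.ofPred_forall]
    exact MeasurableSet.iInter fun i => (hmeas _) (measurableSet_singleton (v i))

end Measure

end OneSidedWalk

open OneSidedWalk in
theorem stmt_0_general
    {Ω : Type*} [MeasurableSpace Ω] (μ : Measure Ω) [IsProbabilityMeasure μ]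
    (p q : ℝ) (hp : 1/2 < p) (hp1 : p < 1) (hq : q = 1 - p)
    (ξ : ℕ → Ω → Bool) (hmeas : ∀ k, Measurable (ξ k))
    (hindep : iIndepFun ξ μ)
    (hdist : ∀ k, 1 ≤ k → μ {ω | ξ k ω = true} = ENNReal.ofReal q)
    (Z : ℕ → Ω → ℕ)
    (hZ0 : ∀ ω, Z 0 ω = 0)
    (hZ : ∀ k ω, Z (k+1) ω = if ξ (k+1) ω then Z k ω + 1 else Z k ω - 1)
    (l n : ℕ) (hn : l ≤ n) :
    μ {ω | ∃ k, 1 ≤ k ∧ k ≤ n ∧ Z k ω = l} ≤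
      ENNReal.ofReal (((n : ℝ) - l + 1) * ((1 - q/p) / (1 - (q/p)^(l+1))) * (q/p)^l
        + (2 * Real.sqrt (p*q) / (1 - 2 * Real.sqrt (p*q))^2) * (2*q)^l) := by
  have hq0 : 0 < q := by linarith
  have hqp : q < p := by linarith
  have hpq : p + q = 1 := by linarith
  have hZ_eq k ω : Z k ω = reflWalk (fun i => ξ (i + 1) ω) k := by
    induction k with
    | zero => exact hZ0 ω
    | succ k ih => rw [hZ, ih]; rfl
  have hvisit : {ω | ∃ k, 1 ≤ k ∧ k ≤ n ∧ Z k ω = l} ⊆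
      ⋃ k ∈ Icc l n, {ω | reflWalk (fun i => ξ (i + 1) ω) k = l} := by
    rintro ω ⟨k, -, hkn, hk⟩
    rw [hZ_eq] at hk
    exact Set.mem_biUnion (mem_Icc.2 ⟨hk ▸ reflWalk_le_self _ _, hkn⟩) hk
  have hsum := sum_pathProb_reflWalk_eq_le hq0 hqp hpq hn
  have hx := two_mul_sqrt_mul_lt_one hpq hqp.ne
  have hr := div_le_two_mul_sqrt_mul hq0.le hqp.le hpq
  calc μ {ω | ∃ k, 1 ≤ k ∧ k ≤ n ∧ Z k ω = l}
      ≤ ∑ k ∈ Icc l n, μ {ω | reflWalk (fun i => ξ (i + 1) ω) k = l} :=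
        (measure_mono hvisit).trans (measure_biUnion_finset_le _ _)
    _ = ENNReal.ofReal (∑ k ∈ Icc l n, pathProb p q k (fun b => reflWalk b k = l)) := by
        rw [ENNReal.ofReal_sum_of_nonneg fun k _ => pathProb_nonneg (by linarith) hq0.le _]
        exact sum_congr rfl fun k _ => measure_eq_ofReal_pathProb hpq (by linarith) hq0.le hmeas
          hindep hdist _ fun b c h hb => (reflWalk_congr h).symm.trans hb
    _ ≤ _ := by
        refine ENNReal.ofReal_le_ofReal (hsum.trans (add_le_add ?_ ?_))
        · rw [mul_assoc]
          exact mul_le_mul_of_nonneg_left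
            (pow_sub_pow_succ_le (by positivity) ((div_lt_one (by linarith)).2 hqp) l)
            (by linarith [(Nat.cast_le (α := ℝ)).2 hn])
        · exact mul_div_one_sub_le hr (by positivity) hx (by positivity)

/-- Upper bound on the probability that the one-sided random walk
visits state `l` within its first `n` steps. -/
theorem stmt_0
    {Ω : Type*} [MeasurableSpace Ω] (μ : Measure Ω) [IsProbabilityMeasure μ]
    (p q : ℝ) (hp : 1/2 < p) (hp1 : p < 1) (hq : q = 1 - p)
    (ξ : ℕ → Ω → Bool) (hmeas : ∀ k, Measurable (ξ k))
    (hindep : iIndepFun ξ μ)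
    (hdist : ∀ k, 1 ≤ k → μ {ω | ξ k ω = true} = ENNReal.ofReal q)
    (Z : ℕ → Ω → ℕ)
    (hZ0 : ∀ ω, Z 0 ω = 0)
    (hZ : ∀ k ω, Z (k+1) ω = if ξ (k+1) ω then Z k ω + 1 else Z k ω - 1)
    (l n : ℕ) (hl : 1 ≤ l) (hn : l ≤ n) :
    μ {ω | ∃ k, 1 ≤ k ∧ k ≤ n ∧ Z k ω = l} ≤
      ENNReal.ofReal (((n : ℝ) - l + 1) * ((1 - q/p) / (1 - (q/p)^(l+1))) * (q/p)^l
        + (2 * Real.sqrt (p*q) / (1 - 2 * Real.sqrt (p*q))^2) * (2*q)^l) :=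
  stmt_0_general μ p q hp hp1 hq ξ hmeas hindep hdist Z hZ0 hZ l n hn
end

section
/- Let l ≥ 1 be an integer and let P be the (l+1) × (l+1) transition matrix of the birth–death chain on states {0, 1, …, l} given by P_{i,i+1} = q for 0 ≤ i ≤ l−1, P_{i,i−1} = p for 1 ≤ i ≤ l, P_{0,0} = p, P_{l,l} = q, and all other entries zero. Then for every integer m ≥ 0, (P^m)_{0,l} ≤ ((1 − q/p)/(1 − (q/p)^{l+1})) · (q/p)^{l} + (2p/(1 − 2√(pq))) · (q/p)^{(l+1)/2} · (2√(pq))^{m}. -/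
open MeasureTheory

private lemma two_term_sum {n : ℕ} (f : Fin n → ℝ) (A B : Fin n) (hAB : A ≠ B)
    (h : ∀ k, k ≠ A → k ≠ B → f k = 0) :
    ∑ k, f k = f A + f B := by
  have h1 : ∑ k, f k = ∑ k ∈ ({A, B} : Finset (Fin n)), f k := by
    refine (Finset.sum_subset (Finset.subset_univ _) ?_).symm
    intro x _ hx
    simp only [Finset.mem_insert, Finset.mem_singleton] at hx
    push_neg at hx
    exact h x hx.1 hx.2
  rw [h1, Finset.sum_pair hAB]

section rows

variable {p q : ℝ} {l : ℕ} (hl : 1 ≤ l)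
variable {P : Matrix (Fin (l+1)) (Fin (l+1)) ℝ}
variable (hP : ∀ i j : Fin (l+1), P i j =
      if (j : ℕ) = (i : ℕ) + 1 then q
      else if (j : ℕ) + 1 = (i : ℕ) then p
      else if (i : ℕ) = 0 ∧ (j : ℕ) = 0 then p
      else if (i : ℕ) = l ∧ (j : ℕ) = l then q
      else 0)

include hl hP

private lemma row0 (v : Fin (l+1) → ℝ) :
    ∑ k, P ⟨0, by omega⟩ k * v k = p * v ⟨0, by omega⟩ + q * v ⟨1, by omega⟩ := by
  have e1 : P ⟨0, by omega⟩ ⟨0, by omega⟩ = p := by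
    rw [hP]; simp only [Fin.val_mk]
    split_ifs <;> first | rfl | (exfalso; omega) | (exfalso; tauto)
  have e2 : P ⟨0, by omega⟩ ⟨1, by omega⟩ = q := by
    rw [hP]; simp only [Fin.val_mk]
    split_ifs <;> first | rfl | (exfalso; omega) | (exfalso; tauto)
  rw [two_term_sum _ ⟨0, by omega⟩ ⟨1, by omega⟩
      (Fin.ne_of_val_ne (by simp only [Fin.val_mk]; omega))]
  · rw [e1, e2]
  · intro k hk0 hk1
    have h0 : (k : ℕ) ≠ 0 := fun h => hk0 (Fin.ext h)
    have h1 : (k : ℕ) ≠ 1 := fun h => hk1 (Fin.ext h)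
    have hz : P ⟨0, by omega⟩ k = 0 := by
      rw [hP]; simp only [Fin.val_mk]
      split_ifs <;> first | rfl | (exfalso; omega) | (exfalso; tauto)
    rw [hz, zero_mul]

private lemma rowmid (v : Fin (l+1) → ℝ) (i : ℕ) (hi0 : 0 < i) (hil : i < l) :
    ∑ k, P ⟨i, by omega⟩ k * v k = p * v ⟨i-1, by omega⟩ + q * v ⟨i+1, by omega⟩ := by
  have e1 : P ⟨i, by omega⟩ ⟨i-1, by omega⟩ = p := by
    rw [hP]; simp only [Fin.val_mk]
    split_ifs <;> first | rfl | (exfalso; omega) | (exfalso; tauto)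
  have e2 : P ⟨i, by omega⟩ ⟨i+1, by omega⟩ = q := by
    rw [hP]; simp only [Fin.val_mk]
    split_ifs <;> first | rfl | (exfalso; omega) | (exfalso; tauto)
  rw [two_term_sum _ ⟨i-1, by omega⟩ ⟨i+1, by omega⟩
      (Fin.ne_of_val_ne (by simp only [Fin.val_mk]; omega))]
  · rw [e1, e2]
  · intro k hkA hkB
    have h0 : (k : ℕ) ≠ i - 1 := fun h => hkA (Fin.ext h)
    have h1 : (k : ℕ) ≠ i + 1 := fun h => hkB (Fin.ext h)
    have hz : P ⟨i, by omega⟩ k = 0 := by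
      rw [hP]; simp only [Fin.val_mk]
      split_ifs <;> first | rfl | (exfalso; omega) | (exfalso; tauto)
    rw [hz, zero_mul]

private lemma rowtop (v : Fin (l+1) → ℝ) :
    ∑ k, P ⟨l, by omega⟩ k * v k = p * v ⟨l-1, by omega⟩ + q * v ⟨l, by omega⟩ := by
  have e1 : P ⟨l, by omega⟩ ⟨l-1, by omega⟩ = p := by
    rw [hP]; simp only [Fin.val_mk]
    split_ifs <;> first | rfl | (exfalso; omega) | (exfalso; tauto)
  have e2 : P ⟨l, by omega⟩ ⟨l, by omega⟩ = q := by
    rw [hP]; simp only [Fin.val_mk]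
    split_ifs <;> first | rfl | (exfalso; omega) | (exfalso; tauto)
  rw [two_term_sum _ ⟨l-1, by omega⟩ ⟨l, by omega⟩
      (Fin.ne_of_val_ne (by simp only [Fin.val_mk]; omega))]
  · rw [e1, e2]
  · intro k hkA hkB
    have h0 : (k : ℕ) ≠ l - 1 := fun h => hkA (Fin.ext h)
    have h1 : (k : ℕ) ≠ l := fun h => hkB (Fin.ext h)
    have hz : P ⟨l, by omega⟩ k = 0 := by
      rw [hP]; simp only [Fin.val_mk]
      split_ifs <;> first | rfl | (exfalso; omega) | (exfalso; tauto)
    rw [hz, zero_mul]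

private lemma colsum (hp0 : 0 < p) (hq0 : 0 < q) (hpq : p + q = 1) (k : Fin (l+1)) :
    ∑ j : Fin (l+1), (q/p) ^ (j : ℕ) * P j k = (q/p) ^ (k : ℕ) := by
  have hrp : q / p * p = q := div_mul_cancel₀ q (ne_of_gt hp0)
  have hr0 : 0 < q / p := div_pos hq0 hp0
  rcases Nat.eq_zero_or_pos (k : ℕ) with hk0 | hkpos
  · have e1 : P ⟨0, by omega⟩ k = p := by
      rw [hP]; simp only [Fin.val_mk]
      split_ifs <;> first | rfl | (exfalso; omega) | (exfalso; tauto)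
    have e2 : P ⟨1, by omega⟩ k = p := by
      rw [hP]; simp only [Fin.val_mk]
      split_ifs <;> first | rfl | (exfalso; omega) | (exfalso; tauto)
    rw [two_term_sum _ ⟨0, by omega⟩ ⟨1, by omega⟩
        (Fin.ne_of_val_ne (by simp only [Fin.val_mk]; omega))]
    · rw [e1, e2]; simp only [Fin.val_mk, pow_zero, pow_one, hk0]
      nlinarith [hrp]
    · intro j hjA hjB
      have h0 : (j : ℕ) ≠ 0 := fun h => hjA (Fin.ext h)
      have h1 : (j : ℕ) ≠ 1 := fun h => hjB (Fin.ext h)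
      have hz : P j k = 0 := by
        rw [hP]
        split_ifs <;> first | rfl | (exfalso; omega) | (exfalso; tauto)
      rw [hz, mul_zero]
  · rcases Nat.lt_or_ge (k : ℕ) l with hkl | hkl
    · obtain ⟨c, hc⟩ : ∃ c, (k : ℕ) = c + 1 := ⟨(k : ℕ) - 1, by omega⟩
      have e1 : P ⟨c, by omega⟩ k = q := by
        rw [hP]; simp only [Fin.val_mk]
        split_ifs <;> first | rfl | (exfalso; omega) | (exfalso; tauto)
      have e2 : P ⟨c+2, by omega⟩ k = p := by
        rw [hP]; simp only [Fin.val_mk]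
        split_ifs <;> first | rfl | (exfalso; omega) | (exfalso; tauto)
      rw [two_term_sum _ ⟨c, by omega⟩ ⟨c+2, by omega⟩
          (Fin.ne_of_val_ne (by simp only [Fin.val_mk]; omega))]
      · rw [e1, e2]; simp only [Fin.val_mk, hc]
        have hexp : (q/p) ^ (c + 2) = (q/p) ^ c * (q/p) * (q/p) := by ring
        rw [hexp, pow_succ]
        linear_combination ((q/p)^c * ((q/p) - 1)) * hrp + ((q/p)^c * (q/p)) * hpq
      · intro j hjA hjB
        have h0 : (j : ℕ) ≠ c := fun h => hjA (Fin.ext h)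
        have h1 : (j : ℕ) ≠ c + 2 := fun h => hjB (Fin.ext h)
        have hz : P j k = 0 := by
          rw [hP]
          split_ifs <;> first | rfl | (exfalso; omega) | (exfalso; tauto)
        rw [hz, mul_zero]
    · have hk : (k : ℕ) = l := by omega
      obtain ⟨c, hc⟩ : ∃ c, l = c + 1 := ⟨l - 1, by omega⟩
      have e1 : P ⟨c, by omega⟩ k = q := by
        rw [hP]; simp only [Fin.val_mk]
        split_ifs <;> first | rfl | (exfalso; omega) | (exfalso; tauto)
      have e2 : P ⟨l, by omega⟩ k = q := by
        rw [hP]; simp only [Fin.val_mk]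
        split_ifs <;> first | rfl | (exfalso; omega) | (exfalso; tauto)
      rw [two_term_sum _ ⟨c, by omega⟩ ⟨l, by omega⟩
          (Fin.ne_of_val_ne (by simp only [Fin.val_mk]; omega))]
      · rw [e1, e2]; simp only [Fin.val_mk, hk, hc, pow_succ]
        linear_combination (-(q/p)^c) * hrp + ((q/p)^c * (q/p)) * hpq
      · intro j hjA hjB
        have h0 : (j : ℕ) ≠ c := fun h => hjA (Fin.ext h)
        have h1 : (j : ℕ) ≠ l := fun h => hjB (Fin.ext h)
        have hz : P j k = 0 := by
          rw [hP]
          split_ifs <;> first | rfl | (exfalso; omega) | (exfalso; tauto)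
        rw [hz, mul_zero]

end rows

private lemma mono_of_adj {l : ℕ} (f : Fin (l+1) → ℝ)
    (hadj : ∀ i : ℕ, (h : i < l) → f ⟨i, by omega⟩ ≤ f ⟨i+1, by omega⟩) :
    ∀ a b : Fin (l+1), a ≤ b → f a ≤ f b := by
  have key : ∀ d a : ℕ, ∀ h : a + d < l + 1, f ⟨a, by omega⟩ ≤ f ⟨a + d, h⟩ := by
    intro d
    induction d with
    | zero => intro a h; exact le_of_eq (congrArg f (Fin.ext rfl))
    | succ d ihd =>
        intro a h
        have h1 : a + d < l + 1 := by omega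
        have h2 : a + d < l := by omega
        calc f ⟨a, by omega⟩ ≤ f ⟨a + d, h1⟩ := ihd a h1
          _ ≤ f ⟨a + d + 1, by omega⟩ := hadj (a + d) h2
          _ = f ⟨a + (d + 1), h⟩ := congrArg f (Fin.ext rfl)
  intro a b hab
  have hab' : (a : ℕ) ≤ (b : ℕ) := hab
  have h := key ((b : ℕ) - (a : ℕ)) (a : ℕ) (by omega)
  have e1 : (⟨(a : ℕ), by omega⟩ : Fin (l+1)) = a := Fin.ext rfl
  have e2 : (⟨(a : ℕ) + ((b : ℕ) - (a : ℕ)), by omega⟩ : Fin (l+1)) = b :=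
    Fin.ext (by simp only [Fin.val_mk]; omega)
  rw [e1, e2] at h
  exact h

/-- Entrywise bound for powers of the transition matrix of the
birth–death chain on `{0,…,l}`:
`(P^m)_{0,l} ≤ ((1 − q/p)/(1 − (q/p)^{l+1}))·(q/p)^l + (2p/(1 − 2√(pq)))·(q/p)^{(l+1)/2}·(2√(pq))^m`. -/
theorem stmt_3
    (p q : ℝ) (hp : 1/2 < p) (hp1 : p < 1) (hq : q = 1 - p)
    (l : ℕ) (hl : 1 ≤ l)
    (P : Matrix (Fin (l+1)) (Fin (l+1)) ℝ)
    (hP : ∀ i j : Fin (l+1), P i j =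
      if (j : ℕ) = (i : ℕ) + 1 then q
      else if (j : ℕ) + 1 = (i : ℕ) then p
      else if (i : ℕ) = 0 ∧ (j : ℕ) = 0 then p
      else if (i : ℕ) = l ∧ (j : ℕ) = l then q
      else 0)
    (m : ℕ) :
    (P ^ m) 0 (Fin.last l) ≤
      ((1 - q/p) / (1 - (q/p)^(l+1))) * (q/p)^l
        + (2 * p / (1 - 2 * Real.sqrt (p*q))) * (q/p) ^ (((l : ℝ) + 1)/2)
            * (2 * Real.sqrt (p*q))^m := by
  have hp0 : 0 < p := by linarith
  have hq0 : 0 < q := by rw [hq]; linarith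
  have hpq : p + q = 1 := by rw [hq]; ring
  have hqp : q < p := by rw [hq]; linarith
  have hr0 : 0 < q / p := div_pos hq0 hp0
  have hr1 : q / p < 1 := (div_lt_one hp0).mpr hqp
  -- step formula
  have hstep : ∀ (n : ℕ) (j : Fin (l+1)),
      (P ^ (n+1)) j (Fin.last l) = ∑ k, P j k * (P ^ n) k (Fin.last l) := by
    intro n j
    rw [pow_succ', Matrix.mul_apply]
  -- monotonicity in the starting state
  have hmono : ∀ n : ℕ, ∀ a b : Fin (l+1), a ≤ b →
      (P ^ n) a (Fin.last l) ≤ (P ^ n) b (Fin.last l) := by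
    intro n
    induction n with
    | zero =>
        intro a b hab
        simp only [pow_zero, Matrix.one_apply]
        by_cases hbl : b = Fin.last l
        · subst hbl
          by_cases hal : a = Fin.last l
          · simp [hal]
          · simp [hal]
        · have hal : a ≠ Fin.last l := by
            intro h; subst h
            exact hbl (le_antisymm (Fin.le_last b) hab)
          simp [hal, hbl]
    | succ n ih =>
        refine mono_of_adj _ ?_
        intro i hil
        rw [hstep n ⟨i, by omega⟩, hstep n ⟨i+1, by omega⟩]
        set v : Fin (l+1) → ℝ := fun k => (P ^ n) k (Fin.last l) with hv
        have hadj : ∀ a b : Fin (l+1), a ≤ b → v a ≤ v b := ih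
        rcases Nat.eq_zero_or_pos i with hi0 | hi0
        · subst hi0
          rcases Nat.lt_or_ge 1 l with h1l | h1l
          · -- l ≥ 2 : row 0 vs row 1 (interior)
            rw [row0 hl hP v, rowmid hl hP v 1 (by omega) h1l]
            have : v ⟨1, by omega⟩ ≤ v ⟨2, by omega⟩ :=
              hadj _ _ (by rw [Fin.mk_le_mk]; omega)
            have he : (⟨1-1, by omega⟩ : Fin (l+1)) = ⟨0, by omega⟩ := Fin.ext rfl
            rw [he]
            nlinarith [this, hq0.le]
          · -- l = 1 : row 0 vs row 1 = top row
            have hl1 : l = 1 := by omega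
            have he : (⟨0+1, by omega⟩ : Fin (l+1)) = ⟨l, by omega⟩ := Fin.ext (by simp only [Fin.val_mk]; omega)
            rw [he, row0 hl hP v, rowtop hl hP v]
            have he1 : (⟨l-1, by omega⟩ : Fin (l+1)) = ⟨0, by omega⟩ := Fin.ext (by simp only [Fin.val_mk]; omega)
            have he2 : (⟨l, by omega⟩ : Fin (l+1)) = ⟨1, by omega⟩ := Fin.ext (by simp only [Fin.val_mk]; omega)
            rw [he1, he2]
        · -- i ≥ 1
          rcases Nat.lt_or_ge (i+1) l with h2l | h2l
          · -- both rows interior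
            rw [rowmid hl hP v i hi0 (by omega), rowmid hl hP v (i+1) (by omega) h2l]
            have hv1 : v ⟨i-1, by omega⟩ ≤ v ⟨i+1-1, by omega⟩ :=
              hadj _ _ (by rw [Fin.mk_le_mk]; omega)
            have hv2 : v ⟨i+1, by omega⟩ ≤ v ⟨i+1+1, by omega⟩ :=
              hadj _ _ (by rw [Fin.mk_le_mk]; omega)
            nlinarith [hv1, hv2, hq0.le, hp0.le]
          · -- i+1 = l : interior row vs top row
            have hil' : i + 1 = l := by omega
            have he : (⟨i+1, by omega⟩ : Fin (l+1)) = ⟨l, by omega⟩ := Fin.ext (by simp only [Fin.val_mk]; omega)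
            rw [he, rowmid hl hP v i hi0 (by omega), rowtop hl hP v]
            have hv1 : v ⟨i-1, by omega⟩ ≤ v ⟨l-1, by omega⟩ :=
              hadj _ _ (by rw [Fin.mk_le_mk]; omega)
            have he2 : (⟨l, by omega⟩ : Fin (l+1)) = ⟨i+1, by omega⟩ := Fin.ext (by simp only [Fin.val_mk]; omega)
            rw [he2]
            nlinarith [hv1, hp0.le]
  -- stationarity
  have hstat : ∀ n : ℕ,
      ∑ j : Fin (l+1), (q/p) ^ (j : ℕ) * (P ^ n) j (Fin.last l) = (q/p) ^ l := by
    intro n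
    induction n with
    | zero =>
        have hterm : ∀ j : Fin (l+1),
            (q/p) ^ (j : ℕ) * (P ^ 0) j (Fin.last l)
              = if j = Fin.last l then (q/p) ^ (j:ℕ) else 0 := by
          intro j
          rw [pow_zero, Matrix.one_apply]
          split_ifs <;> ring
        rw [Finset.sum_congr rfl (fun j _ => hterm j), Finset.sum_ite_eq' _ (Fin.last l)]
        simp [Fin.last]
    | succ n ih =>
        calc ∑ j : Fin (l+1), (q/p) ^ (j:ℕ) * (P ^ (n+1)) j (Fin.last l)
            = ∑ j : Fin (l+1), ∑ k : Fin (l+1),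
                ((q/p) ^ (j:ℕ) * P j k) * (P ^ n) k (Fin.last l) := by
              refine Finset.sum_congr rfl fun j _ => ?_
              rw [hstep n j, Finset.mul_sum]
              exact Finset.sum_congr rfl fun k _ => by ring
          _ = ∑ k : Fin (l+1), (∑ j : Fin (l+1), (q/p) ^ (j:ℕ) * P j k)
                * (P ^ n) k (Fin.last l) := by
              rw [Finset.sum_comm]
              exact Finset.sum_congr rfl fun k _ => (Finset.sum_mul _ _ _).symm
          _ = ∑ k : Fin (l+1), (q/p) ^ (k:ℕ) * (P ^ n) k (Fin.last l) := by
              refine Finset.sum_congr rfl fun k _ => ?_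
              rw [colsum hl hP hp0 hq0 hpq k]
          _ = (q/p) ^ l := ih
  -- combine: (P^m) 0 last ≤ stationary term
  have hzero_le : ∀ j : Fin (l+1), (P ^ m) 0 (Fin.last l) ≤ (P ^ m) j (Fin.last l) :=
    fun j => hmono m 0 j (Fin.zero_le j)
  have hgeompos : 0 < ∑ j : Fin (l+1), (q/p) ^ (j:ℕ) :=
    Finset.sum_pos (fun j _ => pow_pos hr0 _) Finset.univ_nonempty
  have hsumle : (∑ j : Fin (l+1), (q/p) ^ (j:ℕ)) * (P ^ m) 0 (Fin.last l) ≤ (q/p) ^ l := by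
    rw [← hstat m, Finset.sum_mul]
    refine Finset.sum_le_sum fun j _ => ?_
    exact mul_le_mul_of_nonneg_left (hzero_le j) (pow_nonneg hr0.le _)
  have hgeom : ∑ j : Fin (l+1), (q/p) ^ (j:ℕ) = (1 - (q/p)^(l+1)) / (1 - q/p) := by
    rw [Fin.sum_univ_eq_sum_range (fun j => (q/p) ^ j) (l+1), geom_sum_eq (ne_of_lt hr1)]
    rw [div_eq_div_iff (by linarith) (by linarith)]
    ring
  have hden : 0 < 1 - (q/p)^(l+1) := by
    have hpl : (q/p)^(l+1) < 1 := pow_lt_one₀ hr0.le hr1 (by omega)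
    linarith
  have hfirst : (P ^ m) 0 (Fin.last l) ≤ ((1 - q/p) / (1 - (q/p)^(l+1))) * (q/p)^l := by
    rw [hgeom] at hsumle
    have h1r : (0:ℝ) < 1 - q/p := by linarith
    have hS : 0 < (1 - (q/p)^(l+1)) / (1 - q/p) := div_pos hden h1r
    have hx : (P ^ m) 0 (Fin.last l) * ((1 - (q/p)^(l+1)) / (1 - q/p)) ≤ (q/p)^l := by
      linarith [hsumle]
    calc (P ^ m) 0 (Fin.last l)
        ≤ (q/p)^l / ((1 - (q/p)^(l+1)) / (1 - q/p)) := (le_div_iff₀ hS).mpr hx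
      _ = ((1 - q/p) / (1 - (q/p)^(l+1))) * (q/p)^l := by
          rw [div_div_eq_mul_div]; ring
  -- the second term is nonnegative
  have hpq4 : p * q < 1/4 := by nlinarith
  have hs0 : 0 < Real.sqrt (p * q) := Real.sqrt_pos.mpr (mul_pos hp0 hq0)
  have hs2 : Real.sqrt (p*q) ^ 2 = p * q := Real.sq_sqrt (mul_pos hp0 hq0).le
  have hshalf : Real.sqrt (p*q) < 1/2 := by nlinarith [hs0, hs2, hpq4]
  have hsecond : 0 < (2 * p / (1 - 2 * Real.sqrt (p*q))) * (q/p) ^ (((l : ℝ) + 1)/2)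
      * (2 * Real.sqrt (p*q))^m := by
    apply mul_pos
    apply mul_pos
    · exact div_pos (by linarith) (by linarith)
    · exact Real.rpow_pos_of_pos hr0 _
    · exact pow_pos (by linarith) m
  linarith
end

section
/- For every integer n ≥ 2 and every ω > 0, setting l = ⌈(1 + ω) · log n / log(1/(2q))⌉, the one-sided random walk satisfies P( max_{0 ≤ k ≤ n} Z_k ≥ l ) ≤ n^{−ω} + c · n^{−(1+ω)}, where c = 2√(pq)/(1 − 2√(pq))². -/
/-!
With `ρ = p / q`, the process `ρ ^ Z_k` is a martingale while the walk is away from `0`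
(`q ρ^(z+1) + p ρ^(z-1) = ρ^z`), and from `0` it gains `qρ + p - 1 = p - q` in expectation.
Hence the walk stopped on reaching `l` satisfies `E[ρ ^ Z_n] ≤ 1 + n (p - q)`, and Markov's
inequality bounds the probability of reaching `l` by time `n` by `(1 + n (p - q)) / ρ^l`.
Since `1 + n (p - q) ≤ n (2p)^l`, this is at most `n (2q)^l ≤ n^(-ω)` by the choice of `l`.
-/

open MeasureTheory ProbabilityTheory

open scoped ENNReal

lemma one_add_mul_sub_div_pow_le {p q x : ℝ} (hq : 0 < q) (hpq : p + q = 1) (hqp : q ≤ p)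
    (hx : 1 ≤ x) {l : ℕ} (hl : 1 ≤ l) :
    (1 + x * (p - q)) / (p / q) ^ l ≤ x * (2 * q) ^ l := by
  have h2p : 1 ≤ 2 * p := by linarith
  have hρ : 0 < p / q := div_pos (hq.trans_le hqp) hq
  have hcancel : 2 * q * (p / q) = 2 * p := by field_simp
  rw [div_le_iff₀ (pow_pos hρ l), mul_assoc, ← mul_pow, hcancel]
  calc 1 + x * (p - q) ≤ x * (2 * p) := by nlinarith
    _ ≤ x * (2 * p) ^ l := by gcongr; exact le_self_pow₀ h2p (by omega)

lemma pow_le_rpow_neg_of_div_log_le {a x s : ℝ} (ha0 : 0 < a) (ha1 : a < 1) (hx : 0 < x) {l : ℕ}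
    (hl : s * Real.log x / Real.log (1 / a) ≤ l) :
    a ^ l ≤ x ^ (-s) := by
  have hlog : 0 < Real.log (1 / a) := Real.log_pos (one_lt_one_div ha0 ha1)
  rw [div_le_iff₀ hlog, one_div, Real.log_inv] at hl
  rw [← Real.log_le_log_iff (by positivity) (by positivity), Real.log_pow, Real.log_rpow hx]
  linarith

lemma lintegral_comp_indepFun_bool {Ω α : Type*} [MeasurableSpace Ω] [MeasurableSpace α]
    {μ : Measure Ω} {X : Ω → α} {Y : Ω → Bool} (hX : Measurable X)
    (hY : Measurable Y) (hXY : IndepFun X Y μ) (f : α → Bool → ℝ≥0∞)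
    (hf : ∀ b, Measurable (f · b)) :
    ∫⁻ ω, f (X ω) (Y ω) ∂μ
      = μ {ω | Y ω = true} * ∫⁻ ω, f (X ω) true ∂μ
        + μ {ω | Y ω = false} * ∫⁻ ω, f (X ω) false ∂μ := by
  have hind : ∀ b, Measurable (({b} : Set Bool).indicator (1 : Bool → ℝ≥0∞)) :=
    fun b => measurable_one.indicator (measurableSet_singleton b)
  have hterm : ∀ b, ∫⁻ ω, f (X ω) b * ({b} : Set Bool).indicator 1 (Y ω) ∂μ
      = μ {ω | Y ω = b} * ∫⁻ ω, f (X ω) b ∂μ := by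
    intro b
    have hYb : ∫⁻ ω, ({b} : Set Bool).indicator 1 (Y ω) ∂μ = μ {ω | Y ω = b} :=
      lintegral_indicator_one (hY (measurableSet_singleton b))
    rw [mul_comm, ← hYb]
    exact lintegral_mul_eq_lintegral_mul_lintegral_of_indepFun (f := fun ω => f (X ω) b)
      ((hf b).comp hX) ((hind b).comp hY) (hXY.comp (hf b) (hind b))
  have hsplit : (fun ω => f (X ω) (Y ω)) = fun ω =>
      f (X ω) true * ({true} : Set Bool).indicator 1 (Y ω)
        + f (X ω) false * ({false} : Set Bool).indicator 1 (Y ω) := by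
    funext ω
    cases Y ω <;> simp
  rw [hsplit, lintegral_add_left, hterm, hterm]
  exact ((hf true).comp hX).mul ((hind true).comp hY)

namespace ReflectedWalk

def step (z : ℕ) (b : Bool) : ℕ := if b then z + 1 else z - 1

def walk (b : ℕ → Bool) : ℕ → ℕ
  | 0 => 0
  | k + 1 => step (walk b k) (b (k + 1))

def stoppedStep (l z : ℕ) (b : Bool) : ℕ := if l ≤ z then z else step z b

def stoppedWalk (l : ℕ) (b : ℕ → Bool) : ℕ → ℕ
  | 0 => 0
  | k + 1 => stoppedStep l (stoppedWalk l b k) (b (k + 1))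

lemma eq_walk {b : ℕ → Bool} {z : ℕ → ℕ} (h0 : z 0 = 0)
    (hsucc : ∀ k, z (k + 1) = if b (k + 1) then z k + 1 else z k - 1) : z = walk b := by
  funext k
  induction k with
  | zero => exact h0
  | succ k ih => rw [hsucc, ih]; rfl

lemma step_le_succ (z : ℕ) (b : Bool) : step z b ≤ z + 1 := by
  unfold step; split <;> omega

lemma stoppedWalk_eq_ite (l : ℕ) (b : ℕ → Bool) (n : ℕ) :
    stoppedWalk l b n = if ∃ k ≤ n, l ≤ walk b k then l else walk b n := by
  induction n with
  | zero => simp only [stoppedWalk, walk, Nat.le_zero, exists_eq_left]; split <;> omega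
  | succ n ih =>
    by_cases hit : ∃ k ≤ n, l ≤ walk b k
    · rw [if_pos (hit.imp fun k hk => ⟨hk.1.trans n.le_succ, hk.2⟩), stoppedWalk, ih,
        if_pos hit, stoppedStep, if_pos le_rfl]
    · push Not at hit
      have hsucc : stoppedWalk l b (n + 1) = walk b (n + 1) := by
        rw [stoppedWalk, ih, if_neg (by simpa using hit), stoppedStep,
          if_neg (hit n le_rfl).not_ge, walk]
      rw [hsucc]
      split_ifs with hit'
      · obtain ⟨k, hk, hlk⟩ := hit'
        obtain rfl : k = n + 1 := by by_contra hne; exact (hit k (by omega)).not_ge hlk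
        have hstep := step_le_succ (walk b n) (b (n + 1))
        have hlt := hit n le_rfl
        simp only [walk] at hlk ⊢
        omega
      · rfl

lemma le_stoppedWalk_of_exists {l : ℕ} {b : ℕ → Bool} {n : ℕ}
    (h : ∃ k ≤ n, l ≤ walk b k) :
    l ≤ stoppedWalk l b n := by
  rw [stoppedWalk_eq_ite, if_pos h]

lemma stoppedWalk_congr {l : ℕ} {b b' : ℕ → Bool} {n : ℕ} (h : ∀ i ≤ n, b i = b' i) :
    stoppedWalk l b n = stoppedWalk l b' n := by
  induction n with
  | zero => rfl
  | succ n ih =>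
    rw [stoppedWalk, stoppedWalk, ih fun i hi => h i (hi.trans n.le_succ), h (n + 1) le_rfl]

lemma expected_pow_stoppedStep_le {p q : ℝ} (hq : 0 < q) (hpq : p + q = 1) (hqp : q ≤ p)
    (l z : ℕ) :
    q * (p / q) ^ stoppedStep l z true + p * (p / q) ^ stoppedStep l z false
      ≤ (p / q) ^ z + (p - q) := by
  obtain ⟨ρ, rfl⟩ : ∃ ρ, p = ρ * q := ⟨p / q, (div_mul_cancel₀ p hq.ne').symm⟩
  rw [mul_div_cancel_right₀ ρ hq.ne']
  have hρ : 0 ≤ ρ := nonneg_of_mul_nonneg_left (hq.le.trans hqp) hq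
  simp only [stoppedStep, step, Bool.false_eq_true, ↓reduceIte]
  split_ifs with hlz
  · nlinarith [pow_nonneg hρ z]
  · rcases z with _ | z
    · simp only [pow_zero, zero_add, pow_one, Nat.zero_sub]
      linarith
    · have hmart : q * ρ ^ (z + 1 + 1) + ρ * q * ρ ^ (z + 1 - 1) = ρ ^ (z + 1) := by
        rw [Nat.add_sub_cancel, ← mul_one (ρ ^ (z + 1)), ← hpq]
        ring
      linarith

section Probability

variable {Ω : Type*} [MeasurableSpace Ω] {μ : Measure Ω} {ξ : ℕ → Ω → Bool}

def potential (ρ : ℝ) (z : ℕ) : ℝ≥0∞ := ENNReal.ofReal (ρ ^ z)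

lemma measurable_stoppedWalk (hmeas : ∀ k, Measurable (ξ k)) (l k : ℕ) :
    Measurable fun ω => stoppedWalk l (ξ · ω) k := by
  induction k with
  | zero => exact measurable_const
  | succ k ih =>
    exact (measurable_of_countable (Function.uncurry (stoppedStep l))).comp
      (ih.prodMk (hmeas (k + 1)))

lemma indepFun_stoppedWalk (hmeas : ∀ k, Measurable (ξ k)) (hindep : iIndepFun ξ μ)
    (l k : ℕ) :
    IndepFun (fun ω => stoppedWalk l (ξ · ω) k) (ξ (k + 1)) μ := by
  classical
  have hdisj : Disjoint (Finset.range (k + 1)) {k + 1} := by simp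
  let extend (v : Finset.range (k + 1) → Bool) (i : ℕ) : Bool :=
    if h : i ∈ Finset.range (k + 1) then v ⟨i, h⟩ else false
  have hW : (fun ω => stoppedWalk l (ξ · ω) k)
      = (fun v => stoppedWalk l (extend v) k) ∘ fun ω (i : Finset.range (k + 1)) => ξ i ω := by
    funext ω
    exact stoppedWalk_congr fun i hi => by simp [extend, hi]
  rw [hW]
  exact (hindep.indepFun_finset _ _ hdisj hmeas).comp
    (measurable_of_countable fun v : Finset.range (k + 1) → Bool => stoppedWalk l (extend v) k)
    (measurable_pi_apply ⟨k + 1, Finset.mem_singleton_self _⟩)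

lemma lintegral_potential_stoppedWalk_succ_le [IsProbabilityMeasure μ]
    (hmeas : ∀ k, Measurable (ξ k)) (hindep : iIndepFun ξ μ) {p q : ℝ} (hq : 0 < q)
    (hpq : p + q = 1) (hqp : q ≤ p) {l k : ℕ}
    (hdist : μ {ω | ξ (k + 1) ω = true} = ENNReal.ofReal q) :
    ∫⁻ ω, potential (p / q) (stoppedWalk l (ξ · ω) (k + 1)) ∂μ
      ≤ ∫⁻ ω, potential (p / q) (stoppedWalk l (ξ · ω) k) ∂μ
        + ENNReal.ofReal (p - q) := by
  have hp : 0 ≤ p := hq.le.trans hqp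
  have hfalse : μ {ω | ξ (k + 1) ω = false} = ENNReal.ofReal p := by
    have hcompl : {ω | ξ (k + 1) ω = false} = {ω | ξ (k + 1) ω = true}ᶜ := by ext; simp
    have hS : MeasurableSet {ω | ξ (k + 1) ω = true} :=
      hmeas (k + 1) (measurableSet_singleton true)
    rw [hcompl, prob_compl_eq_one_sub hS, hdist,
      ← ENNReal.ofReal_one, ← ENNReal.ofReal_sub _ hq.le, ← hpq, add_sub_cancel_right]
  set W := fun ω => stoppedWalk l (ξ · ω) k
  have hW : Measurable W := measurable_stoppedWalk hmeas l k
  have hstep : ∀ b, Measurable fun z => potential (p / q) (stoppedStep l z b) :=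
    fun b => measurable_of_countable _
  have hstepW : ∀ b, Measurable fun ω => potential (p / q) (stoppedStep l (W ω) b) :=
    fun b => (hstep b).comp hW
  calc ∫⁻ ω, potential (p / q) (stoppedWalk l (ξ · ω) (k + 1)) ∂μ
      = ENNReal.ofReal q * ∫⁻ ω, potential (p / q) (stoppedStep l (W ω) true) ∂μ
        + ENNReal.ofReal p * ∫⁻ ω, potential (p / q) (stoppedStep l (W ω) false) ∂μ := by
        rw [← hdist, ← hfalse]
        exact lintegral_comp_indepFun_bool hW (hmeas (k + 1))
          (indepFun_stoppedWalk hmeas hindep l k) _ hstep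
    _ = ∫⁻ ω, ENNReal.ofReal (q * (p / q) ^ stoppedStep l (W ω) true
          + p * (p / q) ^ stoppedStep l (W ω) false) ∂μ := by
        rw [← lintegral_const_mul _ (hstepW true), ← lintegral_const_mul _ (hstepW false),
          ← lintegral_add_left ((hstepW true).const_mul _)]
        congr 1 with ω
        rw [ENNReal.ofReal_add (by positivity) (by positivity), ENNReal.ofReal_mul hq.le,
          ENNReal.ofReal_mul hp, potential, potential]
    _ ≤ ∫⁻ ω, (potential (p / q) (W ω) + ENNReal.ofReal (p - q)) ∂μ := by
        refine lintegral_mono fun ω => ?_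
        rw [potential, ← ENNReal.ofReal_add (by positivity) (sub_nonneg.mpr hqp)]
        exact ENNReal.ofReal_le_ofReal (expected_pow_stoppedStep_le hq hpq hqp l (W ω))
    _ = ∫⁻ ω, potential (p / q) (W ω) ∂μ + ENNReal.ofReal (p - q) := by
        rw [lintegral_add_right _ measurable_const, lintegral_const, measure_univ, mul_one]

lemma lintegral_potential_stoppedWalk_le [IsProbabilityMeasure μ]
    (hmeas : ∀ k, Measurable (ξ k)) (hindep : iIndepFun ξ μ) {p q : ℝ} (hq : 0 < q)
    (hpq : p + q = 1) (hqp : q ≤ p)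
    (hdist : ∀ k, 1 ≤ k → μ {ω | ξ k ω = true} = ENNReal.ofReal q) (l n : ℕ) :
    ∫⁻ ω, potential (p / q) (stoppedWalk l (ξ · ω) n) ∂μ
      ≤ ENNReal.ofReal (1 + n * (p - q)) := by
  induction n with
  | zero => simp [stoppedWalk, potential]
  | succ n ih =>
    calc ∫⁻ ω, potential (p / q) (stoppedWalk l (ξ · ω) (n + 1)) ∂μ
        ≤ ∫⁻ ω, potential (p / q) (stoppedWalk l (ξ · ω) n) ∂μ
          + ENNReal.ofReal (p - q) :=
          lintegral_potential_stoppedWalk_succ_le hmeas hindep hq hpq hqp (hdist _ le_add_self)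
      _ ≤ ENNReal.ofReal (1 + n * (p - q)) + ENNReal.ofReal (p - q) := by gcongr
      _ = ENNReal.ofReal (1 + (n + 1 : ℕ) * (p - q)) := by
        rw [← ENNReal.ofReal_add (by nlinarith) (by linarith)]
        push_cast
        ring_nf

lemma measure_exists_le_walk_le [IsProbabilityMeasure μ]
    (hmeas : ∀ k, Measurable (ξ k)) (hindep : iIndepFun ξ μ) {p q : ℝ} (hq : 0 < q)
    (hpq : p + q = 1) (hqp : q ≤ p)
    (hdist : ∀ k, 1 ≤ k → μ {ω | ξ k ω = true} = ENNReal.ofReal q) (l n : ℕ) :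
    μ {ω | ∃ k ≤ n, l ≤ walk (ξ · ω) k}
      ≤ ENNReal.ofReal ((1 + n * (p - q)) / (p / q) ^ l) := by
  have hρ : 1 ≤ p / q := (one_le_div hq).mpr hqp
  have hρl : 0 < (p / q) ^ l := by positivity
  set W := fun ω => stoppedWalk l (ξ · ω) n
  have hsub : {ω | ∃ k ≤ n, l ≤ walk (ξ · ω) k}
      ⊆ {ω | potential (p / q) l ≤ potential (p / q) (W ω)} :=
    fun ω hω => ENNReal.ofReal_le_ofReal (pow_le_pow_right₀ hρ (le_stoppedWalk_of_exists hω))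
  rw [ENNReal.ofReal_div_of_pos hρl, ENNReal.le_div_iff_mul_le (Or.inl (by simpa using hρl))
    (Or.inl ENNReal.ofReal_ne_top), mul_comm]
  calc potential (p / q) l * μ {ω | ∃ k ≤ n, l ≤ walk (ξ · ω) k}
      ≤ potential (p / q) l * μ {ω | potential (p / q) l ≤ potential (p / q) (W ω)} := by
        gcongr
    _ ≤ ∫⁻ ω, potential (p / q) (W ω) ∂μ :=
        mul_meas_ge_le_lintegral₀ (f := fun ω => potential (p / q) (W ω))
          ((measurable_of_countable (potential (p / q))).comp
            (measurable_stoppedWalk hmeas l n)).aemeasurable _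
    _ ≤ ENNReal.ofReal (1 + n * (p - q)) :=
        lintegral_potential_stoppedWalk_le hmeas hindep hq hpq hqp hdist l n

end Probability

end ReflectedWalk

/-- For `l = ⌈(1+ω)·log n / log(1/(2q))⌉`, the one-sided random walk
stays below `l` in its first `n` steps with probability at least
`1 − n^{−ω} − c·n^{−(1+ω)}`, where `c = 2√(pq)/(1 − 2√(pq))²`. -/
theorem stmt_4
    {Ω : Type*} [MeasurableSpace Ω] (μ : Measure Ω) [IsProbabilityMeasure μ]
    (p q : ℝ) (hp : 1/2 < p) (hp1 : p < 1) (hq : q = 1 - p)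
    (ξ : ℕ → Ω → Bool) (hmeas : ∀ k, Measurable (ξ k))
    (hindep : iIndepFun ξ μ)
    (hdist : ∀ k, 1 ≤ k → μ {ω | ξ k ω = true} = ENNReal.ofReal q)
    (Z : ℕ → Ω → ℕ)
    (hZ0 : ∀ ω, Z 0 ω = 0)
    (hZ : ∀ k ω, Z (k+1) ω = if ξ (k+1) ω then Z k ω + 1 else Z k ω - 1)
    (n : ℕ) (hn : 2 ≤ n) (w : ℝ) (hw : 0 < w)
    (l : ℕ) (hl : l = ⌈(1 + w) * Real.log n / Real.log (1 / (2*q))⌉₊) :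
    μ {ω | ∃ k ≤ n, l ≤ Z k ω} ≤
      ENNReal.ofReal ((n : ℝ) ^ (-w)
        + (2 * Real.sqrt (p*q) / (1 - 2 * Real.sqrt (p*q))^2) * (n : ℝ) ^ (-(1 + w))) := by
  have hq0 : 0 < q := by linarith
  have hpq : p + q = 1 := by linarith
  have hqp : q ≤ p := by linarith
  have hn1 : (1 : ℝ) < n := by exact_mod_cast hn
  have hn0 : (0 : ℝ) < n := by linarith
  have hlog : 0 < (1 + w) * Real.log n / Real.log (1 / (2 * q)) :=
    div_pos (mul_pos (by linarith) (Real.log_pos hn1))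
      (Real.log_pos (one_lt_one_div (by linarith) (by linarith)))
  have hl1 : 1 ≤ l := hl ▸ Nat.one_le_iff_ne_zero.mpr (Nat.ceil_pos.mpr hlog).ne'
  have h2q : (2 * q) ^ l ≤ (n : ℝ) ^ (-(1 + w)) :=
    pow_le_rpow_neg_of_div_log_le (by linarith) (by linarith) hn0 (hl ▸ Nat.le_ceil _)
  have hZwalk : ∀ ω, (Z · ω) = ReflectedWalk.walk (ξ · ω) :=
    fun ω => ReflectedWalk.eq_walk (hZ0 ω) (hZ · ω)
  have hc : 0 ≤ (2 * Real.sqrt (p*q) / (1 - 2 * Real.sqrt (p*q))^2) * (n : ℝ) ^ (-(1 + w)) := by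
    positivity
  calc μ {ω | ∃ k ≤ n, l ≤ Z k ω}
      = μ {ω | ∃ k ≤ n, l ≤ ReflectedWalk.walk (ξ · ω) k} := by simp only [← hZwalk]
    _ ≤ ENNReal.ofReal ((1 + n * (p - q)) / (p / q) ^ l) :=
      ReflectedWalk.measure_exists_le_walk_le hmeas hindep hq0 hpq hqp hdist l n
    _ ≤ _ := by
      refine ENNReal.ofReal_le_ofReal ?_
      calc (1 + n * (p - q)) / (p / q) ^ l ≤ n * (2 * q) ^ l :=
            one_add_mul_sub_div_pow_le hq0 hpq hqp hn1.le hl1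
        _ ≤ n * (n : ℝ) ^ (-(1 + w)) := by gcongr
        _ = (n : ℝ) ^ (-w) := by
            rw [← Real.rpow_one_add' hn0.le (by linarith)]; ring_nf
        _ ≤ _ := le_add_of_nonneg_right hc
end

section
/- Let n ≥ 2 be an integer, ω > 0, and 0 < β < 1/2. If γ ≥ max{ 1/2, (1/(2q))^{log(2β)/((1+ω)·log n)} }, then with probability at least 1 − n^{−ω} − c·n^{−(1+ω)}, either T < n or min_{1 ≤ k ≤ n} A_k ≥ β·ᾱ. -/
/-!
Along a path, `A k = ᾱ * γ ^ e k` for an integer exponent `e`, and the threshold `β ᾱ` sits between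
the exponents `N` and `N + 1`. If `A` falls below `β ᾱ` before time `n ≤ T`, then after the last
time `s` with `A s ≥ ᾱ` (where necessarily `A s = ᾱ`) the exponent walks from `0` to `N + 1` through
the corridor `1, …, N` by steps `±1`, and it steps down with conditional probability at least `p`.
Hence `X ^ e` with `X = p / q` is a supermartingale there (`p X⁻¹ + q X = 1`), which bounds the
probability of such an excursion starting at `s` by `(q / p) ^ N`. A union bound over `s < n`
gives `n (q / p) ^ N`, and the assumption on `γ` makes this at most `n (2 q) ^ N ≤ n ^ (-ω)`.
-/

open MeasureTheory ProbabilityTheory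

theorem measureReal_mono_ae {Ω : Type*} [MeasurableSpace Ω] {μ : Measure Ω} [IsFiniteMeasure μ]
    {s t : Set Ω} (h : s ≤ᵐ[μ] t) : μ.real s ≤ μ.real t :=
  ENNReal.toReal_mono (measure_ne_top μ t) (measure_mono_ae h)

theorem mul_measureReal_le_measureReal_inter {Ω : Type*} {m m₀ : MeasurableSpace Ω}
    {μ : Measure Ω} [IsFiniteMeasure μ] (hm : m ≤ m₀) {E U : Set Ω} {p : ℝ}
    (hE : MeasurableSet[m] E) (hU : MeasurableSet[m₀] U)
    (h : ∀ᵐ x ∂μ, x ∈ E → p ≤ μ[U.indicator (fun _ => (1 : ℝ)) | m] x) :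
    p * μ.real E ≤ μ.real (E ∩ U) := by
  have hint : Integrable (U.indicator fun _ => (1 : ℝ)) μ := (integrable_const 1).indicator hU
  calc p * μ.real E = ∫ _ in E, p ∂μ := by rw [setIntegral_const, smul_eq_mul, mul_comm]
    _ ≤ ∫ x in E, μ[U.indicator (fun _ => (1 : ℝ)) | m] x ∂μ :=
        setIntegral_mono_ae_restrict (integrableOn_const (measure_ne_top μ E))
          integrable_condExp.integrableOn ((ae_restrict_iff' (hm _ hE)).2 h)
    _ = ∫ x in E, U.indicator (fun _ => (1 : ℝ)) x ∂μ := setIntegral_condExp hm hint hE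
    _ = μ.real (E ∩ U) := by rw [setIntegral_indicator hU]; simp

theorem ofReal_one_sub_le_of_measureReal_compl_le {Ω : Type*} [MeasurableSpace Ω]
    {μ : Measure Ω} [IsProbabilityMeasure μ] {s : Set Ω} {a : ℝ} (h : μ.real sᶜ ≤ a) :
    ENNReal.ofReal (1 - a) ≤ μ s := by
  rw [ENNReal.ofReal_le_iff_le_toReal (measure_ne_top μ s)]
  have := measureReal_union_le (μ := μ) s sᶜ
  rw [Set.union_compl_self, probReal_univ] at this
  change _ ≤ μ.real s
  linarith

section Lattice

variable {γ ᾱ : ℝ}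

theorem strictAnti_mul_zpow (hᾱ : 0 < ᾱ) (hγ0 : 0 < γ) (hγ1 : γ < 1) :
    StrictAnti fun i : ℤ => ᾱ * γ ^ i :=
  fun _ _ h => mul_lt_mul_of_pos_left (zpow_right_strictAnti₀ hγ0 hγ1 h) hᾱ

theorem mul_zpow_lt_self_iff (hᾱ : 0 < ᾱ) (hγ0 : 0 < γ) (hγ1 : γ < 1) (i : ℤ) :
    ᾱ * γ ^ i < ᾱ ↔ 0 < i := by
  simpa using (strictAnti_mul_zpow hᾱ hγ0 hγ1).lt_iff_gt (a := i) (b := 0)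

theorem self_le_mul_zpow_iff (hᾱ : 0 < ᾱ) (hγ0 : 0 < γ) (hγ1 : γ < 1) (i : ℤ) :
    ᾱ ≤ ᾱ * γ ^ i ↔ i ≤ 0 := by
  simpa using (strictAnti_mul_zpow hᾱ hγ0 hγ1).le_iff_ge (a := 0) (b := i)

theorem mul_zpow_le_self_iff (hᾱ : 0 < ᾱ) (hγ0 : 0 < γ) (hγ1 : γ < 1) (i : ℤ) :
    ᾱ * γ ^ i ≤ ᾱ ↔ 0 ≤ i := by
  simpa using (strictAnti_mul_zpow hᾱ hγ0 hγ1).le_iff_ge (a := i) (b := 0)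

theorem mul_zpow_le_mul_iff (hᾱ : 0 < ᾱ) (hγ0 : 0 < γ) (hγ1 : γ < 1) (i : ℤ) :
    ᾱ * γ ^ i ≤ ᾱ * γ ↔ 1 ≤ i := by
  simpa using (strictAnti_mul_zpow hᾱ hγ0 hγ1).le_iff_ge (a := i) (b := 1)

theorem le_mul_zpow_iff {β : ℝ} {N : ℕ} (hᾱ : 0 < ᾱ) (hN : ∀ i : ℤ, β ≤ γ ^ i ↔ i ≤ N)
    (i : ℤ) : β * ᾱ ≤ ᾱ * γ ^ i ↔ i ≤ N := by
  rw [mul_comm ᾱ, mul_le_mul_iff_left₀ hᾱ, hN]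

theorem mul_mul_zpow (hγ0 : 0 < γ) (i : ℤ) : γ * (ᾱ * γ ^ i) = ᾱ * γ ^ (i + 1) := by
  rw [zpow_add_one₀ hγ0.ne']; ring

theorem min_mul_zpow (hᾱ : 0 < ᾱ) (hγ0 : 0 < γ) (hγ1 : γ < 1) (j i : ℤ) :
    min (ᾱ * γ ^ j) (γ⁻¹ * (ᾱ * γ ^ i)) = ᾱ * γ ^ max j (i - 1) := by
  rw [(strictAnti_mul_zpow hᾱ hγ0 hγ1).antitone.map_max, zpow_sub_one₀ hγ0.ne']
  ring_nf

theorem exists_le_zpow_iff {β : ℝ} (hγ0 : 0 < γ) (hγ1 : γ < 1) (hβ0 : 0 < β) (hβ1 : β ≤ 1) :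
    ∃ N : ℕ, ∀ i : ℤ, β ≤ γ ^ i ↔ i ≤ N := by
  classical
  have hex : ∃ m : ℕ, γ ^ m < β := exists_pow_lt_of_lt_one hβ0 hγ1
  obtain ⟨N, hN⟩ : ∃ N, Nat.find hex = N + 1 :=
    Nat.exists_eq_add_one.2 (Nat.pos_of_ne_zero fun h0 => by
      have := Nat.find_spec hex; rw [h0, pow_zero] at this; linarith)
  have hlow : β ≤ γ ^ N := not_lt.1 (Nat.find_min hex (by omega))
  have hup : γ ^ (N + 1) < β := hN ▸ Nat.find_spec hex
  have hanti := zpow_right_strictAnti₀ hγ0 hγ1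
  refine ⟨N, fun i => ⟨fun h => ?_, fun h => ?_⟩⟩
  · by_contra hi
    have := hanti.antitone (show ((N + 1 : ℕ) : ℤ) ≤ i by omega)
    simp only [zpow_natCast] at this
    linarith
  · have := hanti.antitone h
    simp only [zpow_natCast] at this
    linarith

end Lattice

theorem pow_le_exp_neg_of_le_rpow {γ β r D : ℝ} {N : ℕ} (hγ : 1 / 2 ≤ γ) (hβ0 : 0 < β)
    (hβ : β < 1 / 2) (hr0 : 0 < r) (hr1 : r < 1) (hD : 0 < D)
    (hγr : (1 / r) ^ (Real.log (2 * β) / D) ≤ γ) (hN : γ ^ (N + 1) < β) :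
    r ^ N ≤ Real.exp (-D) := by
  have hγ0 : 0 < γ := by linarith
  have hl : Real.log r < 0 := Real.log_neg hr0 hr1
  have hb : Real.log (2 * β) < 0 := Real.log_neg (by positivity) (by linarith)
  have hγ2 : -Real.log 2 ≤ Real.log γ := by
    rw [← Real.log_inv]; exact Real.log_le_log (by norm_num) (by linarith)
  have hNγ : (N + 1) * Real.log γ < Real.log β := by
    simpa [Real.log_pow] using Real.log_lt_log (pow_pos hγ0 _) hN
  have hNb : N * Real.log γ < Real.log (2 * β) := by
    rw [Real.log_mul two_ne_zero hβ0.ne']; linarith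
  have hγl : Real.log (2 * β) / D * -Real.log r ≤ Real.log γ := by
    have h := Real.log_le_log (Real.rpow_pos_of_pos (one_div_pos.2 hr0) _) hγr
    rwa [Real.log_rpow (one_div_pos.2 hr0), one_div, Real.log_inv] at h
  have hNl : N * Real.log r ≤ -D := by
    have h1 : N * (Real.log (2 * β) / D * -Real.log r) < Real.log (2 * β) :=
      (mul_le_mul_of_nonneg_left hγl (Nat.cast_nonneg N)).trans_lt hNb
    rw [← mul_lt_mul_iff_of_pos_right hD] at h1
    field_simp at h1
    nlinarith
  rw [← Real.exp_log (pow_pos hr0 N), Real.log_pow]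
  exact Real.exp_le_exp.2 hNl

theorem natCast_mul_pow_le_rpow {γ β p w : ℝ} {n N : ℕ} (hp : 1 / 2 < p) (hp1 : p < 1)
    (hn : 1 < n) (hw : 0 < 1 + w) (hβ0 : 0 < β) (hβ : β < 1 / 2)
    (hγ : max (1 / 2) ((1 / (2 * (1 - p))) ^ (Real.log (2 * β) / ((1 + w) * Real.log n))) ≤ γ)
    (hN : γ ^ (N + 1) < β) :
    n * ((1 - p) / p) ^ N ≤ (n : ℝ) ^ (-w) := by
  have hn0 : (0 : ℝ) < n := by positivity
  have hD : 0 < (1 + w) * Real.log n :=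
    mul_pos hw (Real.log_pos (by exact_mod_cast hn))
  have hqp : (1 - p) / p ≤ 2 * (1 - p) := by
    rw [div_le_iff₀ (by linarith)]; nlinarith
  calc n * ((1 - p) / p) ^ N ≤ n * (2 * (1 - p)) ^ N := by
        gcongr
    _ ≤ n * Real.exp (-((1 + w) * Real.log n)) := by
        gcongr
        exact pow_le_exp_neg_of_le_rpow (le_of_max_le_left hγ) hβ0 hβ (by linarith) (by linarith)
          hD (le_of_max_le_right hγ) hN
    _ = (n : ℝ) ^ (-w) := by
        rw [Real.rpow_def_of_pos hn0]
        nth_rewrite 1 [← Real.exp_log hn0]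
        rw [← Real.exp_add]
        ring_nf

open Finset in
/-- The supermartingale step for `X ^ level`: at each level `m`, mass `u m` steps to `m - 1` and
mass `d m ≤ u m / X` to `m + 1`; `a` is the resulting mass on levels `1, …, N` and `h` the mass
leaving level `N` upwards. -/
theorem potential_step_of_transitions {X : ℝ} (hX : 1 ≤ X) {N : ℕ} {u d a : ℕ → ℝ} {h : ℝ}
    (hd : ∀ i, 0 ≤ d i) (hud : ∀ i, X * d i ≤ u i) (hu : u (N + 1) = 0)
    (ha : ∀ i < N, a (i + 1) ≤ u (i + 2) + d i) (hh : h ≤ d N) :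
    ∑ i ∈ range N, X ^ (i + 1) * a (i + 1) + X ^ (N + 1) * h ≤
      ∑ i ∈ range N, X ^ (i + 1) * (u (i + 1) + d (i + 1)) + X * d 0 := by
  have hX0 : 0 ≤ X := by linarith
  have hu1 : 0 ≤ u 1 := (mul_nonneg hX0 (hd 1)).trans (hud 1)
  have hup : ∑ i ∈ range N, X ^ (i + 1) * u (i + 2) ≤ ∑ i ∈ range N, X ^ i * u (i + 1) := by
    have e1 := sum_range_succ' (fun i => X ^ i * u (i + 1)) N
    have e2 := sum_range_succ (fun i => X ^ i * u (i + 1)) N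
    simp only [hu, mul_zero, add_zero, pow_zero, one_mul] at e1 e2
    linarith
  have hdown : ∑ i ∈ range N, X ^ (i + 1) * d i + X ^ (N + 1) * d N =
      ∑ i ∈ range N, X ^ (i + 2) * d (i + 1) + X * d 0 := by
    rw [← sum_range_succ (fun i => X ^ (i + 1) * d i), sum_range_succ']
    simp
  have hlevel : ∀ i, X ^ i * u (i + 1) + X ^ (i + 2) * d (i + 1) ≤
      X ^ (i + 1) * (u (i + 1) + d (i + 1)) := by
    intro i
    have := mul_nonneg (pow_nonneg hX0 i)
      (mul_nonneg (sub_nonneg.2 hX) (sub_nonneg.2 (hud (i + 1))))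
    linear_combination this
  calc ∑ i ∈ range N, X ^ (i + 1) * a (i + 1) + X ^ (N + 1) * h
      ≤ ∑ i ∈ range N, X ^ (i + 1) * (u (i + 2) + d i) + X ^ (N + 1) * d N := by
        gcongr with i hi
        exact ha i (mem_range.1 hi)
    _ = ∑ i ∈ range N, X ^ (i + 1) * u (i + 2) +
          (∑ i ∈ range N, X ^ (i + 1) * d i + X ^ (N + 1) * d N) := by
        simp only [mul_add, sum_add_distrib]; ring
    _ ≤ ∑ i ∈ range N, (X ^ i * u (i + 1) + X ^ (i + 2) * d (i + 1)) + X * d 0 := by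
        rw [hdown, sum_add_distrib]; linarith
    _ ≤ ∑ i ∈ range N, X ^ (i + 1) * (u (i + 1) + d (i + 1)) + X * d 0 := by
        gcongr with i; exact hlevel i

def IsStepPath (γ αmax : ℝ) (a : ℕ → ℝ) : Prop :=
  ∀ k, a (k + 1) = γ * a k ∨ a (k + 1) = min αmax (γ⁻¹ * a k)

namespace IsStepPath

variable {γ ᾱ : ℝ} {j : ℤ} {a : ℕ → ℝ}

theorem exists_zpow (hᾱ : 0 < ᾱ) (hγ0 : 0 < γ) (hγ1 : γ < 1)
    (ha : IsStepPath γ (ᾱ * γ ^ j) a) {s t : ℕ} {i : ℤ} (hs : a s = ᾱ * γ ^ i) (hst : s ≤ t) :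
    ∃ i : ℤ, a t = ᾱ * γ ^ i := by
  induction t, hst using Nat.le_induction with
  | base => exact ⟨i, hs⟩
  | succ t _ ih =>
    obtain ⟨i, hi⟩ := ih
    rcases ha t with h | h
    · exact ⟨i + 1, by rw [h, hi, mul_mul_zpow hγ0]⟩
    · exact ⟨max j (i - 1), by rw [h, hi, min_mul_zpow hᾱ hγ0 hγ1]⟩

/-- Up-steps are capped at `ᾱ * γ ^ j ≥ ᾱ`, so only a down-step from `ᾱ` itself leaves `[ᾱ, ∞)`. -/
theorem eq_of_le_of_succ_lt (hᾱ : 0 < ᾱ) (hγ0 : 0 < γ) (hγ1 : γ < 1) (hj : j ≤ 0)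
    (ha : IsStepPath γ (ᾱ * γ ^ j) a) {s : ℕ} {i : ℤ} (hi : a s = ᾱ * γ ^ i) (hs : ᾱ ≤ a s)
    (hs1 : a (s + 1) < ᾱ) : a s = ᾱ := by
  rw [hi, self_le_mul_zpow_iff hᾱ hγ0 hγ1] at hs
  rcases ha s with h | h
  · rw [h, hi, mul_mul_zpow hγ0, mul_zpow_lt_self_iff hᾱ hγ0 hγ1] at hs1
    rw [hi, show i = 0 by omega, zpow_zero, mul_one]
  · rw [h, hi, min_mul_zpow hᾱ hγ0 hγ1, mul_zpow_lt_self_iff hᾱ hγ0 hγ1] at hs1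
    omega

end IsStepPath

section Corridor

variable {Ω : Type*} (A : ℕ → Ω → ℝ) (T : Ω → ℕ) (ᾱ γ β : ℝ)

def corridor (s t : ℕ) : Set Ω :=
  {x | A s x = ᾱ ∧ (∀ r, s < r → r ≤ t → β * ᾱ ≤ A r x ∧ A r x ≤ ᾱ * γ) ∧ t < T x}

/-- Level `m` is the lattice point `ᾱ * γ ^ m`, so an up-step of `A` lowers the level by one. -/
def corridorLevel (s t m : ℕ) : Set Ω :=
  corridor A T ᾱ γ β s t ∩ {x | A t x = ᾱ * γ ^ (m : ℤ)}

def corridorExit (s t : ℕ) : Set Ω :=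
  corridor A T ᾱ γ β s t ∩ {x | A (t + 1) x < β * ᾱ}

def upStep (αmax : ℝ) (t : ℕ) : Set Ω :=
  {x | A (t + 1) x = min αmax (γ⁻¹ * A t x)}

variable {A T ᾱ γ β} {j : ℤ} {N s t : ℕ} {x : Ω}

theorem corridor_succ_subset : corridor A T ᾱ γ β s (t + 1) ⊆ corridor A T ᾱ γ β s t :=
  fun _ ⟨hs, hr, hT⟩ => ⟨hs, fun r h1 h2 => hr r h1 (h2.trans t.le_succ), t.lt_succ_self.trans hT⟩

theorem measurableSet_corridor [MeasurableSpace Ω] {F : Filtration ℕ ‹_›} (hA : Adapted F A)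
    (hT : IsStoppingTime F fun x => (T x : WithTop ℕ)) (hst : s ≤ t) :
    MeasurableSet[F t] (corridor A T ᾱ γ β s t) := by
  have hTt : MeasurableSet[F t] {x | t < T x} := by
    convert (hT t).compl using 1
    ext x
    simp
  simp only [corridor, Set.ofPred_and, Set.ofPred_forall]
  exact (F.mono hst _ (hA s (measurableSet_singleton ᾱ))).inter
    ((MeasurableSet.iInter fun r => .iInter fun _ => .iInter fun hrt =>
      (F.mono hrt _ (hA r measurableSet_Ici)).inter (F.mono hrt _ (hA r measurableSet_Iic))).inter
      hTt)

theorem measurableSet_corridorLevel [MeasurableSpace Ω] {F : Filtration ℕ ‹_›}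
    (hA : Adapted F A) (hT : IsStoppingTime F fun x => (T x : WithTop ℕ)) (hst : s ≤ t)
    (m : ℕ) : MeasurableSet[F t] (corridorLevel A T ᾱ γ β s t m) :=
  (measurableSet_corridor hA hT hst).inter (hA t (measurableSet_singleton _))

theorem exponent_le_of_mem_corridor (hᾱ : 0 < ᾱ) (hγ0 : 0 < γ) (hγ1 : γ < 1)
    (hN : ∀ i : ℤ, β ≤ γ ^ i ↔ i ≤ N) (hx : x ∈ corridor A T ᾱ γ β s t) (hst : s ≤ t) {i : ℤ}
    (hi : A t x = ᾱ * γ ^ i) : i ≤ N := by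
  rcases hst.eq_or_lt with rfl | hlt
  · have := (self_le_mul_zpow_iff hᾱ hγ0 hγ1 i).1 (hi ▸ hx.1.ge)
    omega
  · exact (le_mul_zpow_iff hᾱ hN i).1 (hi ▸ (hx.2.1 t hlt le_rfl).1)

theorem corridorLevel_self_eq_empty (hᾱ : 0 < ᾱ) (hγ0 : 0 < γ) (hγ1 : γ < 1) (m : ℕ) :
    corridorLevel A T ᾱ γ β s s (m + 1) = ∅ :=
  Set.eq_empty_of_forall_notMem fun x ⟨⟨hs, _⟩, hm⟩ => by
    have := (mul_zpow_lt_self_iff hᾱ hγ0 hγ1 _).2 (by omega : (0 : ℤ) < (m + 1 : ℕ))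
    rw [← show A s x = _ from hm, hs] at this
    exact this.false

theorem corridorLevel_zero_eq_empty (hᾱ : 0 < ᾱ) (hγ1 : γ < 1) (hst : s < t) :
    corridorLevel A T ᾱ γ β s t 0 = ∅ :=
  Set.eq_empty_of_forall_notMem fun x ⟨hx, hm⟩ => by
    have := (hx.2.1 t hst le_rfl).2
    rw [show A t x = ᾱ by simpa using hm] at this
    nlinarith

theorem corridorLevel_eq_empty (hᾱ : 0 < ᾱ) (hγ0 : 0 < γ) (hγ1 : γ < 1)
    (hN : ∀ i : ℤ, β ≤ γ ^ i ↔ i ≤ N) (hst : s ≤ t) :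
    corridorLevel A T ᾱ γ β s t (N + 1) = ∅ :=
  Set.eq_empty_of_forall_notMem fun _ ⟨hx, hm⟩ => by
    have := exponent_le_of_mem_corridor hᾱ hγ0 hγ1 hN hx hst hm
    omega

theorem mem_corridorLevel_of_succ (hᾱ : 0 < ᾱ) (hγ0 : 0 < γ) (hγ1 : γ < 1) (hj : j ≤ 0)
    (hx : IsStepPath γ (ᾱ * γ ^ j) (A · x)) (hst : s ≤ t) {m : ℕ}
    (hm : x ∈ corridorLevel A T ᾱ γ β s (t + 1) (m + 1)) :
    x ∈ corridorLevel A T ᾱ γ β s t (m + 2) ∩ upStep A γ (ᾱ * γ ^ j) t ∪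
      corridorLevel A T ᾱ γ β s t m \ upStep A γ (ᾱ * γ ^ j) t := by
  obtain ⟨hc, hm⟩ := hm
  have hct := corridor_succ_subset hc
  obtain ⟨i, hi⟩ := hx.exists_zpow hᾱ hγ0 hγ1 (i := 0) (by simpa using hc.1) hst
  have hf := (strictAnti_mul_zpow hᾱ hγ0 hγ1).injective
  by_cases hU : x ∈ upStep A γ (ᾱ * γ ^ j) t
  · have : ((m + 1 : ℕ) : ℤ) = max j (i - 1) :=
      hf (hm.symm.trans (hU.trans (by rw [hi, min_mul_zpow hᾱ hγ0 hγ1])))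
    exact Or.inl ⟨⟨hct, hi.trans (by congr 2; omega)⟩, hU⟩
  · have hdown : A (t + 1) x = γ * A t x := (hx t).resolve_right hU
    have : ((m + 1 : ℕ) : ℤ) = i + 1 :=
      hf (hm.symm.trans (hdown.trans (by rw [hi, mul_mul_zpow hγ0])))
    exact Or.inr ⟨⟨hct, hi.trans (by congr 2; omega)⟩, hU⟩

theorem mem_corridorLevel_of_mem_corridorExit (hᾱ : 0 < ᾱ) (hγ0 : 0 < γ) (hγ1 : γ < 1)
    (hj : j ≤ 0) (hN : ∀ i : ℤ, β ≤ γ ^ i ↔ i ≤ N) (hx : IsStepPath γ (ᾱ * γ ^ j) (A · x))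
    (hst : s ≤ t) (he : x ∈ corridorExit A T ᾱ γ β s t) :
    x ∈ corridorLevel A T ᾱ γ β s t N \ upStep A γ (ᾱ * γ ^ j) t := by
  obtain ⟨hc, hlt⟩ := he
  obtain ⟨i, hi⟩ := hx.exists_zpow hᾱ hγ0 hγ1 (i := 0) (by simpa using hc.1) hst
  have hiN := exponent_le_of_mem_corridor hᾱ hγ0 hγ1 hN hc hst hi
  have hlt' : ¬ β * ᾱ ≤ A (t + 1) x := not_le.2 hlt
  by_cases hU : x ∈ upStep A γ (ᾱ * γ ^ j) t
  · rw [show A (t + 1) x = _ from hU, hi, min_mul_zpow hᾱ hγ0 hγ1, le_mul_zpow_iff hᾱ hN] at hlt'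
    omega
  · have hdown : A (t + 1) x = γ * A t x := (hx t).resolve_right hU
    rw [hdown, hi, mul_mul_zpow hγ0, le_mul_zpow_iff hᾱ hN] at hlt'
    exact ⟨⟨hc, hi.trans (by congr 2; omega)⟩, hU⟩

theorem exists_mem_corridorExit (hᾱ : 0 < ᾱ) (hγ0 : 0 < γ) (hγ1 : γ < 1) (hβ : β ≤ 1)
    (hj : j ≤ 0) (hx : IsStepPath γ (ᾱ * γ ^ j) (A · x)) {i₀ : ℤ} (hi₀ : i₀ ≤ 0)
    (hA0 : A 0 x = ᾱ * γ ^ i₀) {n : ℕ} (hTx : n ≤ T x) (hk : ∃ k ≤ n, A k x < β * ᾱ) :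
    ∃ s t, s ≤ t ∧ t < n ∧ x ∈ corridorExit A T ᾱ γ β s t := by
  classical
  obtain ⟨k₀, hk₀n, hk₀⟩ := hk
  have hex : ∃ k, A k x < β * ᾱ := ⟨k₀, hk₀⟩
  obtain ⟨k, hk, hkmin, hkn⟩ : ∃ k, A k x < β * ᾱ ∧ (∀ r < k, β * ᾱ ≤ A r x) ∧ k ≤ n :=
    ⟨Nat.find hex, Nat.find_spec hex, fun r hr => not_lt.1 (Nat.find_min hex hr),
      (Nat.find_min' hex hk₀).trans hk₀n⟩
  have hβᾱ : β * ᾱ ≤ ᾱ := mul_le_of_le_one_left hᾱ.le hβ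
  have hA0' : ᾱ ≤ A 0 x := by rwa [hA0, self_le_mul_zpow_iff hᾱ hγ0 hγ1]
  have hk0 : 0 < k := Nat.pos_of_ne_zero fun h => by rw [h] at hk; linarith
  obtain ⟨s, hs, hsk, hbelow⟩ : ∃ s, ᾱ ≤ A s x ∧ s < k ∧ ∀ r, s < r → r ≤ k → A r x < ᾱ :=
    ⟨Nat.findGreatest (fun r => ᾱ ≤ A r x) (k - 1),
      Nat.findGreatest_spec (P := fun r => ᾱ ≤ A r x) (Nat.zero_le _) hA0',
      by have := Nat.findGreatest_le (P := fun r => ᾱ ≤ A r x) (k - 1); omega,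
      fun r h1 h2 => h2.lt_or_eq.elim
        (fun h => not_le.1 (Nat.findGreatest_is_greatest h1 (by omega)))
        (fun h => h ▸ hk.trans_le hβᾱ)⟩
  have hlat : ∀ r, ∃ i : ℤ, A r x = ᾱ * γ ^ i :=
    fun r => hx.exists_zpow hᾱ hγ0 hγ1 hA0 (Nat.zero_le r)
  refine ⟨s, k - 1, by omega, by omega, ⟨?_, fun r h1 h2 => ⟨hkmin r (by omega), ?_⟩, by omega⟩,
    by rwa [Nat.sub_add_cancel hk0]⟩
  · obtain ⟨i, hi⟩ := hlat s
    exact hx.eq_of_le_of_succ_lt hᾱ hγ0 hγ1 hj hi hs (hbelow _ (by omega) (by omega))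
  · obtain ⟨i, hi⟩ := hlat r
    have := hbelow r h1 (by omega)
    rw [hi, mul_zpow_lt_self_iff hᾱ hγ0 hγ1] at this
    rw [hi, mul_zpow_le_mul_iff hᾱ hγ0 hγ1]
    omega

end Corridor

section Potential

open Finset

variable {Ω : Type*} [mΩ : MeasurableSpace Ω] {μ : Measure Ω} [IsProbabilityMeasure μ]
  {F : Filtration ℕ mΩ} {A : ℕ → Ω → ℝ} {T : Ω → ℕ} {γ ᾱ β p : ℝ} {j : ℤ} {N : ℕ}

/-- `X ^ m` with `X = p / (1 - p)` is superharmonic for the level walk, which steps down with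
conditional probability at least `p`. The last term only matters at `t = s`, when the walk leaves
level `0`. -/
theorem corridor_potential_step (hA : Adapted F A)
    (hT : IsStoppingTime F fun x => (T x : WithTop ℕ)) (hᾱ : 0 < ᾱ) (hγ0 : 0 < γ) (hγ1 : γ < 1)
    (hj : j ≤ 0) (hN : ∀ i : ℤ, β ≤ γ ^ i ↔ i ≤ N)
    (hp : 1 / 2 ≤ p) (hp1 : p < 1) (hstep : ∀ᵐ x ∂μ, IsStepPath γ (ᾱ * γ ^ j) (A · x))
    (hcond : ∀ k, ∀ᵐ x ∂μ, (k < T x ∧ A k x ≤ ᾱ) →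
      p ≤ μ[(upStep A γ (ᾱ * γ ^ j) k).indicator (fun _ => (1 : ℝ)) | F k] x)
    {s t : ℕ} (hst : s ≤ t) :
    ∑ i ∈ range N, (p / (1 - p)) ^ (i + 1) * μ.real (corridorLevel A T ᾱ γ β s (t + 1) (i + 1))
        + (p / (1 - p)) ^ (N + 1) * μ.real (corridorExit A T ᾱ γ β s t) ≤
      ∑ i ∈ range N, (p / (1 - p)) ^ (i + 1) * μ.real (corridorLevel A T ᾱ γ β s t (i + 1))
        + p / (1 - p) * μ.real (corridorLevel A T ᾱ γ β s t 0 \ upStep A γ (ᾱ * γ ^ j) t) := by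
  set U := upStep A γ (ᾱ * γ ^ j) t
  set L := corridorLevel A T ᾱ γ β s t
  have hq : 0 < 1 - p := by linarith
  have hAm : ∀ k, Measurable (A k) := fun k => (hA k).mono (F.le k) le_rfl
  have hU : MeasurableSet U :=
    measurableSet_eq_fun (hAm (t + 1)) (measurable_const.min ((hAm t).const_mul _))
  have hsplit : ∀ m, μ.real (L m ∩ U) + μ.real (L m \ U) = μ.real (L m) :=
    fun m => measureReal_inter_add_sdiff hU
  have hup : ∀ m, p / (1 - p) * μ.real (L m \ U) ≤ μ.real (L m ∩ U) := by
    intro m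
    have := mul_measureReal_le_measureReal_inter (F.le t) (E := L m)
      (measurableSet_corridorLevel hA hT hst m) hU (by
        filter_upwards [hcond t] with x hx hxL
        exact hx ⟨hxL.1.2.2, hxL.2.trans_le
          ((mul_zpow_le_self_iff hᾱ hγ0 hγ1 _).2 (Int.natCast_nonneg m))⟩)
    rw [← hsplit m] at this
    rw [div_mul_eq_mul_div, div_le_iff₀ hq]
    linarith
  have key := potential_step_of_transitions (N := N) (by rw [le_div_iff₀ hq]; linarith)
    (a := fun m => μ.real (corridorLevel A T ᾱ γ β s (t + 1) m))
    (h := μ.real (corridorExit A T ᾱ γ β s t))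
    (fun m => measureReal_nonneg) hup
    (by simp [L, corridorLevel_eq_empty hᾱ hγ0 hγ1 hN hst])
    (fun i _ => (measureReal_mono_ae (by
        filter_upwards [hstep] with x hx hxL
        exact mem_corridorLevel_of_succ hᾱ hγ0 hγ1 hj hx hst hxL)).trans
      (measureReal_union_le _ _))
    (measureReal_mono_ae (by
      filter_upwards [hstep] with x hx hxE
      exact mem_corridorLevel_of_mem_corridorExit hᾱ hγ0 hγ1 hj hN hx hst hxE))
  simpa only [hsplit] using key

theorem sum_measureReal_corridorExit_le (hA : Adapted F A)
    (hT : IsStoppingTime F fun x => (T x : WithTop ℕ)) (hᾱ : 0 < ᾱ) (hγ0 : 0 < γ) (hγ1 : γ < 1)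
    (hj : j ≤ 0) (hN : ∀ i : ℤ, β ≤ γ ^ i ↔ i ≤ N) (hp : 1 / 2 ≤ p) (hp1 : p < 1)
    (hstep : ∀ᵐ x ∂μ, IsStepPath γ (ᾱ * γ ^ j) (A · x))
    (hcond : ∀ k, ∀ᵐ x ∂μ, (k < T x ∧ A k x ≤ ᾱ) →
      p ≤ μ[(upStep A γ (ᾱ * γ ^ j) k).indicator (fun _ => (1 : ℝ)) | F k] x)
    (s n : ℕ) :
    ∑ t ∈ Ico s n, μ.real (corridorExit A T ᾱ γ β s t) ≤ ((1 - p) / p) ^ N := by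
  have hstep' := fun t => corridor_potential_step (μ := μ) (β := β) hA hT hᾱ hγ0 hγ1 hj hN hp
    hp1 hstep hcond (s := s) (t := t)
  set X := p / (1 - p)
  have hX : 0 < X := div_pos (by linarith) (by linarith)
  set Φ : ℕ → ℝ := fun t =>
    ∑ i ∈ range N, X ^ (i + 1) * μ.real (corridorLevel A T ᾱ γ β s t (i + 1))
  have hbound : ∀ t, s + 1 ≤ t →
      Φ t + X ^ (N + 1) * ∑ r ∈ Ico s t, μ.real (corridorExit A T ᾱ γ β s r) ≤ X := by
    intro t ht
    induction t, ht using Nat.le_induction with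
    | base =>
      have h := hstep' s le_rfl
      simp only [corridorLevel_self_eq_empty hᾱ hγ0 hγ1, measureReal_empty, mul_zero,
        sum_const_zero, zero_add] at h
      have : μ.real (corridorLevel A T ᾱ γ β s s 0 \ upStep A γ (ᾱ * γ ^ j) s) ≤ 1 :=
        measureReal_le_one
      simp only [Nat.Ico_succ_singleton, sum_singleton]
      nlinarith
    | succ t ht ih =>
      have h := hstep' t (by omega)
      rw [corridorLevel_zero_eq_empty hᾱ hγ1 (by omega), Set.empty_sdiff, measureReal_empty,
        mul_zero, add_zero] at h
      rw [sum_Ico_succ_top (by omega), mul_add]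
      linarith
  have hsum : X ^ (N + 1) * ∑ t ∈ Ico s n, μ.real (corridorExit A T ᾱ γ β s t) ≤ X := by
    rcases le_or_gt n s with hns | hsn
    · rw [Ico_eq_empty_of_le hns, sum_empty, mul_zero]
      exact hX.le
    · have : 0 ≤ Φ n := sum_nonneg fun i _ => mul_nonneg (pow_nonneg hX.le _) measureReal_nonneg
      linarith [hbound n hsn]
  calc ∑ t ∈ Ico s n, μ.real (corridorExit A T ᾱ γ β s t) ≤ X / X ^ (N + 1) := by
        rw [le_div_iff₀ (by positivity)]
        linarith
    _ = ((1 - p) / p) ^ N := by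
        have hinv : (1 - p) / p * X = 1 := by
          rw [div_mul_div_comm, mul_comm, div_self (by positivity)]
        rw [eq_comm, eq_div_iff (by positivity), pow_succ, ← mul_assoc, ← mul_pow, hinv, one_pow,
          one_mul]

theorem measureReal_drop_below_le (hA : Adapted F A)
    (hT : IsStoppingTime F fun x => (T x : WithTop ℕ)) (hᾱ : 0 < ᾱ) (hγ0 : 0 < γ) (hγ1 : γ < 1)
    (hj : j ≤ 0) (hN : ∀ i : ℤ, β ≤ γ ^ i ↔ i ≤ N) (hp : 1 / 2 ≤ p) (hp1 : p < 1)
    (hstep : ∀ᵐ x ∂μ, IsStepPath γ (ᾱ * γ ^ j) (A · x))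
    (hcond : ∀ k, ∀ᵐ x ∂μ, (k < T x ∧ A k x ≤ ᾱ) →
      p ≤ μ[(upStep A γ (ᾱ * γ ^ j) k).indicator (fun _ => (1 : ℝ)) | F k] x)
    {i₀ : ℤ} (hi₀ : i₀ ≤ 0) (hA0 : ∀ x, A 0 x = ᾱ * γ ^ i₀) (n : ℕ) :
    μ.real {x | n ≤ T x ∧ ∃ k ≤ n, A k x < β * ᾱ} ≤ n * ((1 - p) / p) ^ N := by
  have hβ : β ≤ 1 := by simpa using (hN 0).2 (Int.natCast_nonneg N)
  have hcover : {x | n ≤ T x ∧ ∃ k ≤ n, A k x < β * ᾱ} ≤ᵐ[μ]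
      ⋃ s ∈ range n, ⋃ t ∈ Ico s n, corridorExit A T ᾱ γ β s t := by
    filter_upwards [hstep] with x hx ⟨hTx, hk⟩
    obtain ⟨s, t, hst, htn, he⟩ := exists_mem_corridorExit hᾱ hγ0 hγ1 hβ hj hx hi₀ (hA0 x) hTx hk
    exact Set.mem_biUnion (mem_range.2 (by omega)) (Set.mem_biUnion (mem_Ico.2 ⟨hst, htn⟩) he)
  calc μ.real {x | n ≤ T x ∧ ∃ k ≤ n, A k x < β * ᾱ}
      ≤ ∑ s ∈ range n, ∑ t ∈ Ico s n, μ.real (corridorExit A T ᾱ γ β s t) :=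
        (measureReal_mono_ae hcover).trans ((measureReal_biUnion_finset_le _ _).trans
          (sum_le_sum fun s _ => measureReal_biUnion_finset_le _ _))
    _ ≤ ∑ s ∈ range n, ((1 - p) / p) ^ N := sum_le_sum fun s _ =>
        sum_measureReal_corridorExit_le hA hT hᾱ hγ0 hγ1 hj hN hp hp1 hstep hcond s n
    _ = n * ((1 - p) / p) ^ N := by simp

end Potential

theorem stmt_7_general
    {Ω : Type*} [mΩ : MeasurableSpace Ω] (μ : Measure Ω) [IsProbabilityMeasure μ]
    (F : Filtration ℕ mΩ)
    (γ ᾱ p q : ℝ) (hγ0 : 0 < γ) (hγ1 : γ < 1) (hᾱ : 0 < ᾱ)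
    (hp : 1/2 < p) (hp1 : p < 1) (hq : q = 1 - p)
    (αmax : ℝ) (j' : ℤ) (hj' : j' ≤ 0) (hαmax : αmax = ᾱ * γ ^ j')
    (A : ℕ → Ω → ℝ) (hadp : Adapted F A)
    (T : Ω → ℕ) (hT : IsStoppingTime F (fun x => (T x : WithTop ℕ)))
    (j : ℤ) (hj : j ≤ 0) (hA0 : ∀ x, A 0 x = ᾱ * γ ^ j)
    (hstep : ∀ k, ∀ᵐ x ∂μ,
      A (k+1) x = γ * A k x ∨ A (k+1) x = min αmax (γ⁻¹ * A k x))
    (hcond : ∀ k, ∀ᵐ x ∂μ, (k < T x ∧ A k x ≤ ᾱ) →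
      p ≤ (μ[Set.indicator {x' | A (k+1) x' = min αmax (γ⁻¹ * A k x')}
              (fun _ => (1:ℝ)) | F k]) x)
    (n : ℕ) (hn : 2 ≤ n) (w : ℝ) (hw : 0 < w) (β : ℝ) (hβ0 : 0 < β) (hβ : β < 1/2)
    (hγbig : max (1/2) ((1/(2*q)) ^ (Real.log (2*β) / ((1 + w) * Real.log n))) ≤ γ) :
    ENNReal.ofReal (1 - (n : ℝ) ^ (-w)
        - (2 * Real.sqrt (p*q) / (1 - 2 * Real.sqrt (p*q))^2) * (n : ℝ) ^ (-(1 + w))) ≤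
      μ ({x | T x < n} ∪
         {x | ∀ k, 1 ≤ k → k ≤ n → β * ᾱ ≤ A k x}) := by
  subst hαmax hq
  obtain ⟨N, hN⟩ := exists_le_zpow_iff hγ0 hγ1 hβ0 (by linarith)
  have hN1 : γ ^ (N + 1) < β := lt_of_not_ge fun h => by
    have := (hN ((N + 1 : ℕ) : ℤ)).1 (by rwa [zpow_natCast])
    omega
  have hdrop := measureReal_drop_below_le hadp hT hᾱ hγ0 hγ1 hj' hN hp.le hp1
    (ae_all_iff.2 hstep) hcond hj hA0 n
  have hsub : ({x | T x < n} ∪ {x | ∀ k, 1 ≤ k → k ≤ n → β * ᾱ ≤ A k x})ᶜ ⊆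
      {x | n ≤ T x ∧ ∃ k ≤ n, A k x < β * ᾱ} := fun x hx => by
    simp only [Set.mem_compl_iff, Set.mem_union, Set.mem_ofPred_eq, not_or, not_lt,
      not_forall, not_le] at hx
    obtain ⟨hTx, k, -, hkn, hk⟩ := hx
    exact ⟨hTx, k, hkn, hk⟩
  have hfail := (measureReal_mono hsub).trans
    (hdrop.trans (natCast_mul_pow_le_rpow hp hp1 hn (by linarith) hβ0 hβ hγbig hN1))
  refine (ENNReal.ofReal_le_ofReal ?_).trans (ofReal_one_sub_le_of_measureReal_compl_le hfail)
  have : 0 ≤ 2 * Real.sqrt (p * (1 - p)) / (1 - 2 * Real.sqrt (p * (1 - p))) ^ 2 *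
      (n : ℝ) ^ (-(1 + w)) := by positivity
  linarith

/-- If `γ ≥ max{1/2, (1/(2q))^{log(2β)/((1+ω) log n)}}` with `0 < β < 1/2`,
then with probability at least `1 − n^{−ω} − c·n^{−(1+ω)}`, either `T < n` or
`min_{1≤k≤n} A_k ≥ β·ᾱ`. -/
theorem stmt_7
    {Ω : Type*} [mΩ : MeasurableSpace Ω] (μ : Measure Ω) [IsProbabilityMeasure μ]
    (F : Filtration ℕ mΩ)
    (γ ᾱ p q : ℝ) (hγ0 : 0 < γ) (hγ1 : γ < 1) (hᾱ : 0 < ᾱ)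
    (hp : 1/2 < p) (hp1 : p < 1) (hq : q = 1 - p)
    (αmax : ℝ) (j' : ℤ) (hj' : j' ≤ 0) (hαmax : αmax = ᾱ * γ ^ j')
    (A : ℕ → Ω → ℝ) (hadp : Adapted F A) (hpos : ∀ k x, 0 < A k x)
    (T : Ω → ℕ) (hT : IsStoppingTime F (fun x => (T x : WithTop ℕ)))
    (j : ℤ) (hj : j ≤ 0) (hA0 : ∀ x, A 0 x = ᾱ * γ ^ j)
    (hstep : ∀ k, ∀ᵐ x ∂μ,
      A (k+1) x = γ * A k x ∨ A (k+1) x = min αmax (γ⁻¹ * A k x))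
    (hcond : ∀ k, ∀ᵐ x ∂μ, (k < T x ∧ A k x ≤ ᾱ) →
      p ≤ (μ[Set.indicator {x' | A (k+1) x' = min αmax (γ⁻¹ * A k x')}
              (fun _ => (1:ℝ)) | F k]) x)
    (n : ℕ) (hn : 2 ≤ n) (w : ℝ) (hw : 0 < w) (β : ℝ) (hβ0 : 0 < β) (hβ : β < 1/2)
    (hγbig : max (1/2) ((1/(2*q)) ^ (Real.log (2*β) / ((1 + w) * Real.log n))) ≤ γ) :
    ENNReal.ofReal (1 - (n : ℝ) ^ (-w)
        - (2 * Real.sqrt (p*q) / (1 - 2 * Real.sqrt (p*q))^2) * (n : ℝ) ^ (-(1 + w))) ≤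
      μ ({x | T x < n} ∪
         {x | ∀ k, 1 ≤ k → k ≤ n → β * ᾱ ≤ A k x}) :=
  stmt_7_general (mΩ := mΩ) μ F γ ᾱ p q hγ0 hγ1 hᾱ hp hp1 hq αmax j' hj' hαmax A hadp T hT j hj hA0
    hstep hcond n hn w hw β hβ0 hβ hγbig
end

section
/- Let n ≥ 2 be an integer, ω > 0, and 0 < β < 1/2. If γ ≥ max{ 1/2, (1/(2q))^{log(2β)/((1+ω)·log n)} }, then with probability at least 1 − μ(T > n) − n^{−ω} − c·n^{−(1+ω)}, we have T ≤ n and TOC(T) ≤ n · oc(β·ᾱ). -/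
/-!
Measure step sizes by the potential `V = (ᾱ / A) ^ s` with `γ ^ s = q / p`: on the grid
`A = ᾱ γ ^ i` it equals `(p / q) ^ i`, the exponential martingale of a walk that moves up with
probability at least `p`. While `A ≤ ᾱ` the conditional mean of the next potential exceeds `V`
by at most `1` (the cap `αmax` can only lower it), and from above `ᾱ` the potential jumps to at
most `p / q`. Stopped when `A` first falls to `βᾱ` or at `T`, the potential therefore has
expectation at most `1 + n p / q` after `n` steps. By Markov's inequality, `A` falls to `βᾱ`
before `min T n` with probability at most `(1 + n p / q) β ^ s`, and the lower bound on `γ` makes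
`β ^ s ≤ (q / p) n ^ (-(1 + ω))`. Off this event and `{T > n}`, each of the at most `n` oracle
costs is at most `oc (β ᾱ)`.
-/

open MeasureTheory ProbabilityTheory

lemma stoppedProcess_add_one {Ω β : Type*} [AddCommGroup β] (u : ℕ → Ω → β) (τ : Ω → WithTop ℕ)
    (k : ℕ) : stoppedProcess u τ (k + 1) =
      stoppedProcess u τ k + {x | (k : WithTop ℕ) < τ x}.indicator (u (k + 1) - u k) := by
  ext x
  simp only [stoppedProcess, Pi.add_apply, Set.indicator, Set.mem_ofPred_eq]
  split_ifs with h
  · have h' : WithTop.some (k + 1) ≤ τ x := Order.add_one_le_of_lt (α := ℕ∞) h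
    rw [min_eq_left h', min_eq_left (show WithTop.some k ≤ τ x from h.le)]
    change u (k + 1) x = u k x + (u (k + 1) x - u k x)
    abel
  · have h' : τ x ≤ WithTop.some k := not_lt.1 h
    rw [min_eq_right (h'.trans (WithTop.coe_le_coe.2 k.le_succ)), min_eq_right h', add_zero]

section StoppedDrift

variable {Ω : Type*} {m : MeasurableSpace Ω} [mΩ : MeasurableSpace Ω] {μ : Measure Ω}
  [IsFiniteMeasure μ]

lemma mul_integral_le_integral_mul_indicator_of_le_condExp
    (hm : m ≤ mΩ) {U : Set Ω} (hU : MeasurableSet U) {f : Ω → ℝ}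
    (hf : StronglyMeasurable[m] f) (hfi : Integrable f μ) (hf0 : 0 ≤ f) {p : ℝ}
    (hp : ∀ᵐ x ∂μ, 0 < f x → p ≤ μ[U.indicator (fun _ => (1 : ℝ)) | m] x) :
    p * ∫ x, f x ∂μ ≤ ∫ x, f x * U.indicator (fun _ => (1 : ℝ)) x ∂μ := by
  set g := U.indicator (fun _ => (1 : ℝ))
  have hg : Integrable g μ := (integrable_const 1).indicator hU
  have hfg : Integrable (f * g) μ :=
    hfi.mul_bdd (c := 1) (hg.aestronglyMeasurable) (.of_forall fun x => by
      simp only [g, Set.indicator, Real.norm_eq_abs]; split_ifs <;> simp)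
  have hpull : μ[f * g | m] =ᵐ[μ] f * μ[g | m] :=
    condExp_mul_of_stronglyMeasurable_left hf hfg hg
  calc p * ∫ x, f x ∂μ = ∫ x, f x * p ∂μ := by rw [integral_mul_const, mul_comm]
    _ ≤ ∫ x, f x * μ[g | m] x ∂μ := by
        refine integral_mono_ae (hfi.mul_const p) (integrable_condExp.congr hpull) ?_
        filter_upwards [hp] with x hx
        rcases (hf0 x).eq_or_lt with h | h
        · simp [← h]
        · exact mul_le_mul_of_nonneg_left (hx h) h.le
    _ = ∫ x, μ[f * g | m] x ∂μ := (integral_congr_ae hpull).symm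
    _ = ∫ x, f x * g x ∂μ := integral_condExp hm

lemma integral_mul_factor_le_of_le_condExp
    (hm : m ≤ mΩ) {U : Set Ω} (hU : MeasurableSet U) {f : Ω → ℝ}
    (hf : StronglyMeasurable[m] f) (hfi : Integrable f μ) (hf0 : 0 ≤ f) {p r ψ : ℝ}
    (hp : ∀ᵐ x ∂μ, 0 < f x → p ≤ μ[U.indicator (fun _ => (1 : ℝ)) | m] x)
    (hrψ : r ≤ ψ) (hfactor : (1 - p) * ψ + p * r ≤ 1) :
    ∫ x, f x * (ψ - (ψ - r) * U.indicator (fun _ => (1 : ℝ)) x) ∂μ ≤ ∫ x, f x ∂μ := by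
  have hfU : Integrable (fun x => f x * U.indicator (fun _ => (1 : ℝ)) x) μ :=
    hfi.mul_bdd (c := 1) ((integrable_const 1).indicator hU).aestronglyMeasurable
      (.of_forall fun x => by simp only [Set.indicator, Real.norm_eq_abs]; split_ifs <;> simp)
  have hpU := mul_integral_le_integral_mul_indicator_of_le_condExp hm hU hf hfi hf0 hp
  have hf_nonneg : 0 ≤ ∫ x, f x ∂μ := integral_nonneg hf0
  simp_rw [mul_sub, ← mul_assoc, mul_comm _ (ψ - r), mul_assoc]
  rw [integral_sub (hfi.mul_const ψ) (hfU.const_mul _), integral_mul_const, integral_const_mul]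
  nlinarith [mul_le_mul_of_nonneg_left hpU (sub_nonneg.2 hrψ)]

theorem integral_stoppedProcess_add_one_le [IsProbabilityMeasure μ] {F : Filtration ℕ mΩ}
    {V : ℕ → Ω → ℝ} {τ : Ω → WithTop ℕ} (hτ : IsStoppingTime F τ) (hV : Adapted F V)
    (hV0 : ∀ k, 0 ≤ V k) (hVi : ∀ k, Integrable (V k) μ) {k : ℕ} {G U : Set Ω}
    (hG : MeasurableSet[F k] G) (hU : MeasurableSet U) {p r ψ c : ℝ} (hrψ : r ≤ ψ)
    (hfactor : (1 - p) * ψ + p * r ≤ 1) (hc : 0 ≤ c)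
    (hcond : ∀ᵐ x ∂μ, (k : WithTop ℕ) < τ x → x ∈ G →
      p ≤ μ[U.indicator (fun _ => (1 : ℝ)) | F k] x)
    (hstep : ∀ᵐ x ∂μ, (k : WithTop ℕ) < τ x → x ∈ G →
      V (k + 1) x ≤ V k x * (ψ - (ψ - r) * U.indicator (fun _ => (1 : ℝ)) x) + c)
    (hstep' : ∀ᵐ x ∂μ, (k : WithTop ℕ) < τ x → x ∉ G → V (k + 1) x ≤ V k x + c) :
    ∫ x, stoppedProcess V τ (k + 1) x ∂μ ≤ ∫ x, stoppedProcess V τ k x ∂μ + c := by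
  set D := {x | (k : WithTop ℕ) < τ x}
  have hD : MeasurableSet[F k] D := hτ.measurableSet_gt k
  set f := (D ∩ G).indicator (V k)
  set e := fun x => ψ - (ψ - r) * U.indicator (fun _ => (1 : ℝ)) x
  have hfi : Integrable f μ := (hVi k).indicator (F.le k _ (hD.inter hG))
  have hfe : Integrable (fun x => f x * e x) μ :=
    hfi.mul_bdd (c := |ψ| + |r|) (by fun_prop (disch := measurability))
      (.of_forall fun x => by by_cases hx : x ∈ U <;> simp [e, hx])
  have hincr : ∀ᵐ x ∂μ, D.indicator (V (k + 1) - V k) x ≤ f x * e x - f x + c := by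
    filter_upwards [hstep, hstep'] with x h h'
    by_cases hxD : x ∈ D
    · rw [Set.indicator_of_mem hxD, Pi.sub_apply]
      by_cases hxG : x ∈ G
      · rw [show f x = V k x from Set.indicator_of_mem (Set.mem_inter hxD hxG) _]
        linarith [h hxD hxG]
      · rw [show f x = 0 from Set.indicator_of_notMem (fun hx => hxG hx.2) _]
        linarith [h' hxD hxG]
    · rw [Set.indicator_of_notMem hxD,
        show f x = 0 from Set.indicator_of_notMem (fun hx => hxD hx.1) _]
      simpa using hc
  have hdrift : ∫ x, f x * e x ∂μ ≤ ∫ x, f x ∂μ :=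
    integral_mul_factor_le_of_le_condExp (F.le k) hU
      (((hV k).stronglyMeasurable).indicator (hD.inter hG)) hfi
      (Set.indicator_nonneg fun x _ => hV0 k x) (by
        filter_upwards [hcond] with x hx hfx
        have hmem := Set.mem_of_indicator_ne_zero hfx.ne'
        exact hx hmem.1 hmem.2) hrψ hfactor
  have hDi : Integrable (D.indicator (V (k + 1) - V k)) μ :=
    ((hVi (k + 1)).sub (hVi k)).indicator (F.le k _ hD)
  calc ∫ x, stoppedProcess V τ (k + 1) x ∂μ
      = ∫ x, stoppedProcess V τ k x ∂μ + ∫ x, D.indicator (V (k + 1) - V k) x ∂μ := by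
        rw [stoppedProcess_add_one, integral_add' (integrable_stoppedProcess hτ hVi k) hDi]
    _ ≤ ∫ x, stoppedProcess V τ k x ∂μ + ∫ x, (f x * e x - f x + c) ∂μ :=
        (add_le_add_iff_left _).2
          (integral_mono_ae hDi ((hfe.sub hfi).add (integrable_const c)) hincr)
    _ ≤ ∫ x, stoppedProcess V τ k x ∂μ + c := by
        rw [integral_add (f := fun x => f x * e x - f x) (hfe.sub hfi) (integrable_const c),
          integral_sub hfe hfi]
        simp only [integral_const, probReal_univ, one_smul]
        linarith

end StoppedDrift

noncomputable def stepPotential (ᾱ s a : ℝ) : ℝ := (ᾱ / a) ^ s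

section StepPotential

variable {ᾱ s a b γ αmax : ℝ}

lemma stepPotential_nonneg (hᾱ : 0 ≤ ᾱ) (ha : 0 ≤ a) : 0 ≤ stepPotential ᾱ s a :=
  Real.rpow_nonneg (div_nonneg hᾱ ha) s

lemma stepPotential_mul (hᾱ : 0 ≤ ᾱ) (hγ : 0 ≤ γ) (ha : 0 ≤ a) :
    stepPotential ᾱ s (γ * a) = γ⁻¹ ^ s * stepPotential ᾱ s a := by
  rw [stepPotential, stepPotential, ← Real.mul_rpow (inv_nonneg.2 hγ) (div_nonneg hᾱ ha),
    div_mul_eq_div_div_swap, div_eq_inv_mul _ γ]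

lemma stepPotential_le_of_le (hᾱ : 0 ≤ ᾱ) (hs : 0 ≤ s) (ha : 0 < a) (hab : a ≤ b) :
    stepPotential ᾱ s b ≤ stepPotential ᾱ s a :=
  Real.rpow_le_rpow (div_nonneg hᾱ (ha.trans_le hab).le) (div_le_div_of_nonneg_left hᾱ ha hab) hs

lemma stepPotential_le_one (hᾱ : 0 < ᾱ) (hs : 0 ≤ s) (ha : ᾱ ≤ a) : stepPotential ᾱ s a ≤ 1 :=
  Real.rpow_le_one (div_nonneg hᾱ.le (hᾱ.trans_le ha).le)
    ((div_le_one (hᾱ.trans_le ha)).2 ha) hs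

lemma stepPotential_min (hᾱ : 0 ≤ ᾱ) (hs : 0 ≤ s) (ha : 0 < a) (hb : 0 < b) :
    stepPotential ᾱ s (min a b) = max (stepPotential ᾱ s a) (stepPotential ᾱ s b) := by
  rcases le_total a b with h | h
  · rw [min_eq_left h, max_eq_left (stepPotential_le_of_le hᾱ hs ha h)]
  · rw [min_eq_right h, max_eq_right (stepPotential_le_of_le hᾱ hs hb h)]

lemma rpow_mul_stepPotential_mul_self (hᾱ : 0 < ᾱ) (hb : 0 < b) :
    b ^ s * stepPotential ᾱ s (b * ᾱ) = 1 := by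
  rw [stepPotential, ← Real.mul_rpow hb.le (by positivity),
    show b * (ᾱ / (b * ᾱ)) = 1 by field_simp, Real.one_rpow]

lemma stepPotential_step_le (hᾱ : 0 < ᾱ) (hs : 0 ≤ s) (hγ0 : 0 < γ) (hγ1 : γ ≤ 1)
    (hαmax : ᾱ ≤ αmax) {a' : ℝ} (ha : 0 < a) (h : a' = γ * a ∨ a' = min αmax (γ⁻¹ * a)) :
    stepPotential ᾱ s a' ≤ max (γ⁻¹ ^ s * stepPotential ᾱ s a) 1 := by
  have hγa : 0 < γ * a := mul_pos hγ0 ha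
  have hle : min (γ * a) ᾱ ≤ a' := by
    rcases h with rfl | rfl
    · exact min_le_left _ _
    · have hγγ : γ * a ≤ γ⁻¹ * a :=
        mul_le_mul_of_nonneg_right (hγ1.trans ((one_le_inv₀ hγ0).2 hγ1)) ha.le
      exact le_min ((min_le_right _ _).trans hαmax) ((min_le_left _ _).trans hγγ)
  calc stepPotential ᾱ s a' ≤ stepPotential ᾱ s (min (γ * a) ᾱ) :=
        stepPotential_le_of_le hᾱ.le hs (lt_min hγa hᾱ) hle
    _ = max (γ⁻¹ ^ s * stepPotential ᾱ s a) (stepPotential ᾱ s ᾱ) := by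
        rw [stepPotential_min hᾱ.le hs hγa hᾱ, stepPotential_mul hᾱ.le hγ0.le ha.le]
    _ ≤ max (γ⁻¹ ^ s * stepPotential ᾱ s a) 1 :=
        max_le_max le_rfl (stepPotential_le_one hᾱ hs le_rfl)

lemma stepPotential_min_inv_mul_le (hᾱ : 0 < ᾱ) (hs : 0 ≤ s) (hγ0 : 0 < γ) (hαmax : ᾱ ≤ αmax)
    (ha : 0 < a) : stepPotential ᾱ s (min αmax (γ⁻¹ * a)) ≤ γ ^ s * stepPotential ᾱ s a + 1 := by
  have hup : 0 < γ⁻¹ * a := by positivity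
  rw [stepPotential_min hᾱ.le hs (hᾱ.trans_le hαmax) hup,
    stepPotential_mul hᾱ.le (inv_nonneg.2 hγ0.le) ha.le, inv_inv]
  have h1 := stepPotential_le_one (s := s) hᾱ hs hαmax
  have h2 : 0 ≤ γ ^ s * stepPotential ᾱ s a :=
    mul_nonneg (Real.rpow_nonneg hγ0.le s) (stepPotential_nonneg hᾱ.le ha.le)
  exact max_le (by linarith) (by linarith [stepPotential_nonneg (s := s) hᾱ.le (hᾱ.le.trans hαmax)])

end StepPotential

structure IsStepSizeProcess {Ω : Type*} [mΩ : MeasurableSpace Ω] (μ : Measure Ω)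
    (F : Filtration ℕ mΩ) (γ ᾱ αmax p : ℝ) (A : ℕ → Ω → ℝ) (T : Ω → ℕ) : Prop where
  gamma_pos : 0 < γ
  gamma_lt_one : γ < 1
  alpha_pos : 0 < ᾱ
  alpha_le_max : ᾱ ≤ αmax
  adapted : Adapted F A
  pos : ∀ k x, 0 < A k x
  alpha_le_initial : ∀ x, ᾱ ≤ A 0 x
  step : ∀ k, ∀ᵐ x ∂μ, A (k + 1) x = γ * A k x ∨ A (k + 1) x = min αmax (γ⁻¹ * A k x)
  isStoppingTime : IsStoppingTime F (fun x => (T x : WithTop ℕ))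
  le_condExp : ∀ k, ∀ᵐ x ∂μ, (k < T x ∧ A k x ≤ ᾱ) →
    p ≤ μ[{x' | A (k + 1) x' = min αmax (γ⁻¹ * A k x')}.indicator (fun _ => (1 : ℝ)) | F k] x

namespace IsStepSizeProcess

variable {Ω : Type*} [mΩ : MeasurableSpace Ω] {μ : Measure Ω} {F : Filtration ℕ mΩ}
  {γ ᾱ αmax p q s : ℝ} {A : ℕ → Ω → ℝ} {T : Ω → ℕ}

lemma one_le_inv_rpow (h : IsStepSizeProcess μ F γ ᾱ αmax p A T) (hs : 0 ≤ s) : 1 ≤ γ⁻¹ ^ s :=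
  Real.one_le_rpow ((one_le_inv₀ h.gamma_pos).2 h.gamma_lt_one.le) hs

lemma adapted_stepPotential (h : IsStepSizeProcess μ F γ ᾱ αmax p A T) :
    Adapted F (fun k x => stepPotential ᾱ s (A k x)) :=
  fun k => (measurable_const.div (h.adapted k)).pow_const s

lemma ae_stepPotential_le_pow (h : IsStepSizeProcess μ F γ ᾱ αmax p A T) (hs : 0 ≤ s) (k : ℕ) :
    ∀ᵐ x ∂μ, stepPotential ᾱ s (A k x) ≤ (γ⁻¹ ^ s) ^ k := by
  induction k with
  | zero =>
    exact .of_forall fun x => by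
      simpa using stepPotential_le_one h.alpha_pos hs (h.alpha_le_initial x)
  | succ k ih =>
    filter_upwards [ih, h.step k] with x hk hx
    calc _ ≤ max (γ⁻¹ ^ s * stepPotential ᾱ s (A k x)) 1 :=
          stepPotential_step_le h.alpha_pos hs h.gamma_pos h.gamma_lt_one.le h.alpha_le_max
            (h.pos k x) hx
      _ ≤ (γ⁻¹ ^ s) ^ (k + 1) := by
          have := h.one_le_inv_rpow hs
          exact max_le (by rw [pow_succ']; gcongr) (one_le_pow₀ this)

lemma integrable_stepPotential [IsFiniteMeasure μ] (h : IsStepSizeProcess μ F γ ᾱ αmax p A T)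
    (hs : 0 ≤ s) (k : ℕ) : Integrable (fun x => stepPotential ᾱ s (A k x)) μ := by
  refine .of_bound ((h.adapted_stepPotential k).mono (F.le k) le_rfl).aestronglyMeasurable
    ((γ⁻¹ ^ s) ^ k) ?_
  filter_upwards [h.ae_stepPotential_le_pow hs k] with x hx
  rwa [Real.norm_of_nonneg (stepPotential_nonneg h.alpha_pos.le (h.pos k x).le)]

lemma ae_stepPotential_succ_le (h : IsStepSizeProcess μ F γ ᾱ αmax p A T) (hs : 0 ≤ s) (k : ℕ) :
    ∀ᵐ x ∂μ, stepPotential ᾱ s (A (k + 1) x) ≤ stepPotential ᾱ s (A k x) *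
      (γ⁻¹ ^ s - (γ⁻¹ ^ s - γ ^ s) *
        {x' | A (k + 1) x' = min αmax (γ⁻¹ * A k x')}.indicator (fun _ => (1 : ℝ)) x) +
      γ⁻¹ ^ s := by
  filter_upwards [h.step k] with x hx
  by_cases hup : x ∈ {x' | A (k + 1) x' = min αmax (γ⁻¹ * A k x')}
  · rw [Set.indicator_of_mem hup, show A (k + 1) x = _ from hup]
    have := stepPotential_min_inv_mul_le (s := s) h.alpha_pos hs h.gamma_pos h.alpha_le_max (h.pos k x)
    linarith [h.one_le_inv_rpow hs]
  · rw [Set.indicator_of_notMem hup, hx.resolve_right hup,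
      stepPotential_mul h.alpha_pos.le h.gamma_pos.le (h.pos k x).le, mul_zero, sub_zero, mul_comm]
    linarith [h.one_le_inv_rpow hs]

lemma ae_stepPotential_succ_le_of_lt (h : IsStepSizeProcess μ F γ ᾱ αmax p A T) (hs : 0 ≤ s)
    (k : ℕ) : ∀ᵐ x ∂μ, ᾱ < A k x →
      stepPotential ᾱ s (A (k + 1) x) ≤ stepPotential ᾱ s (A k x) + γ⁻¹ ^ s := by
  filter_upwards [h.step k] with x hx hlt
  have hψ := h.one_le_inv_rpow hs
  have hv1 := stepPotential_le_one h.alpha_pos hs hlt.le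
  have hv0 := stepPotential_nonneg (s := s) h.alpha_pos.le (h.pos k x).le
  calc stepPotential ᾱ s (A (k + 1) x) ≤ max (γ⁻¹ ^ s * stepPotential ᾱ s (A k x)) 1 :=
        stepPotential_step_le h.alpha_pos hs h.gamma_pos h.gamma_lt_one.le h.alpha_le_max
          (h.pos k x) hx
    _ ≤ γ⁻¹ ^ s := max_le (mul_le_of_le_one_right (by positivity) hv1) hψ
    _ ≤ _ := by linarith

lemma integral_stoppedPotential_add_one_le [IsProbabilityMeasure μ]
    (h : IsStepSizeProcess μ F γ ᾱ αmax p A T) (hp : 0 < p) (hq : q = 1 - p) (hq0 : 0 < q)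
    (hs : 0 ≤ s) (hγs : γ ^ s = q / p) {τ : Ω → WithTop ℕ} (hτ : IsStoppingTime F τ)
    (hτT : ∀ x, τ x ≤ T x) (k : ℕ) :
    ∫ x, stoppedProcess (fun k x => stepPotential ᾱ s (A k x)) τ (k + 1) x ∂μ ≤
      ∫ x, stoppedProcess (fun k x => stepPotential ᾱ s (A k x)) τ k x ∂μ + p / q := by
  have hψ : γ⁻¹ ^ s = p / q := by rw [Real.inv_rpow h.gamma_pos.le, hγs, inv_div]
  have hA (i : ℕ) : Measurable (A i) := (h.adapted i).mono (F.le i) le_rfl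
  have hU : MeasurableSet {x' | A (k + 1) x' = min αmax (γ⁻¹ * A k x')} :=
    measurableSet_eq_fun (hA (k + 1)) (measurable_const.min ((hA k).const_mul _))
  have hfactor : (1 - p) * γ⁻¹ ^ s + p * γ ^ s ≤ 1 := by
    rw [hψ, hγs, ← hq]
    field_simp
    linarith
  rw [← hψ]
  refine integral_stoppedProcess_add_one_le hτ h.adapted_stepPotential
    (fun k x => stepPotential_nonneg h.alpha_pos.le (h.pos k x).le)
    (h.integrable_stepPotential hs) (h.adapted k (measurableSet_Iic (a := ᾱ))) hU
    ((Real.rpow_le_one h.gamma_pos.le h.gamma_lt_one.le hs).trans (h.one_le_inv_rpow hs))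
    hfactor (zero_le_one.trans (h.one_le_inv_rpow hs)) ?_ ?_ ?_
  · filter_upwards [h.le_condExp k] with x hx hkτ hxG
    exact hx ⟨by exact_mod_cast hkτ.trans_le (hτT x), hxG⟩
  · filter_upwards [h.ae_stepPotential_succ_le hs k] with x hx _ _ using hx
  · filter_upwards [h.ae_stepPotential_succ_le_of_lt hs k] with x hx _ hxG
    exact hx (not_le.1 hxG)

lemma integral_stoppedPotential_le [IsProbabilityMeasure μ]
    (h : IsStepSizeProcess μ F γ ᾱ αmax p A T) (hp : 0 < p) (hq : q = 1 - p) (hq0 : 0 < q)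
    (hs : 0 ≤ s) (hγs : γ ^ s = q / p) {τ : Ω → WithTop ℕ} (hτ : IsStoppingTime F τ)
    (hτT : ∀ x, τ x ≤ T x) (n : ℕ) :
    ∫ x, stoppedProcess (fun k x => stepPotential ᾱ s (A k x)) τ n x ∂μ ≤ 1 + n * (p / q) := by
  induction n with
  | zero =>
    calc _ ≤ ∫ _, (1 : ℝ) ∂μ :=
          integral_mono (integrable_stoppedProcess hτ (h.integrable_stepPotential hs) 0)
            (integrable_const 1) fun x => by
              rw [stoppedProcess_eq_of_le (by simp)]
              exact stepPotential_le_one h.alpha_pos hs (h.alpha_le_initial x)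
      _ = 1 + (0 : ℕ) * (p / q) := by simp
  | succ n ih =>
    calc _ ≤ _ + p / q := h.integral_stoppedPotential_add_one_le hp hq hq0 hs hγs hτ hτT n
      _ ≤ 1 + (n + 1 : ℕ) * (p / q) := by push_cast; linarith

lemma measureReal_exists_le_le [IsProbabilityMeasure μ]
    (h : IsStepSizeProcess μ F γ ᾱ αmax p A T) (hp : 0 < p) (hq : q = 1 - p) (hq0 : 0 < q)
    (hs : 0 ≤ s) (hγs : γ ^ s = q / p) {β : ℝ} (hβ : 0 < β) (n : ℕ) :
    μ.real {x | ∃ k ≤ n, k ≤ T x ∧ A k x ≤ β * ᾱ} ≤ (1 + n * (p / q)) * β ^ s := by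
  set hit := hittingAfter A (Set.Iic (β * ᾱ)) 0
  set τ : Ω → WithTop ℕ := fun x => min (T x : WithTop ℕ) (hit x)
  have hτ : IsStoppingTime F τ :=
    h.isStoppingTime.min (h.adapted.isStoppingTime_hittingAfter measurableSet_Iic)
  set W := stoppedProcess (fun k x => stepPotential ᾱ s (A k x)) τ n
  have hsub : {x | ∃ k ≤ n, k ≤ T x ∧ A k x ≤ β * ᾱ} ⊆
      {x | stepPotential ᾱ s (β * ᾱ) ≤ W x} := by
    rintro x ⟨k, hkn, hkT, hk⟩
    have hhit : hit x ≤ k := hittingAfter_le_of_mem (Nat.zero_le k) hk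
    have hτx : τ x = hit x := min_eq_right (hhit.trans (by exact_mod_cast hkT))
    have hA := hittingAfter_mem_set_of_ne_top (ne_top_of_le_ne_top WithTop.coe_ne_top hhit)
    have hτn : τ x ≤ WithTop.some n := hτx ▸ hhit.trans (WithTop.coe_le_coe.2 hkn)
    calc stepPotential ᾱ s (β * ᾱ) ≤ stepPotential ᾱ s (A (τ x).untopA x) := by
          rw [hτx]; exact stepPotential_le_of_le h.alpha_pos.le hs (h.pos _ x) hA
      _ = W x := (stoppedProcess_eq_of_ge (u := fun k x => stepPotential ᾱ s (A k x)) hτn).symm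
  have hmarkov := mul_meas_ge_le_integral_of_nonneg
    (.of_forall fun x => stepPotential_nonneg h.alpha_pos.le (h.pos _ x).le)
    (integrable_stoppedProcess hτ (h.integrable_stepPotential hs) n) (stepPotential ᾱ s (β * ᾱ))
  have hW := h.integral_stoppedPotential_le hp hq hq0 hs hγs hτ (fun x => min_le_left _ _) n
  calc μ.real _ ≤ μ.real {x | stepPotential ᾱ s (β * ᾱ) ≤ W x} := measureReal_mono hsub
    _ = β ^ s * (stepPotential ᾱ s (β * ᾱ) * μ.real {x | stepPotential ᾱ s (β * ᾱ) ≤ W x}) := by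
        rw [← mul_assoc, rpow_mul_stepPotential_mul_self h.alpha_pos hβ, one_mul]
    _ ≤ β ^ s * (1 + n * (p / q)) := by gcongr; exact hmarkov.trans hW
    _ = _ := mul_comm _ _

end IsStepSizeProcess

section Numerics

open Real

lemma rpow_log_div_log_le {γ p q β w N : ℝ} (hγ0 : 0 < γ) (hγ1 : γ < 1) (hγhalf : 1 / 2 ≤ γ)
    (hp : 1 / 2 ≤ p) (hq : q = 1 - p) (hq0 : 0 < q) (hβ0 : 0 < β) (hβ : β < 1 / 2)
    (hw : 0 < 1 + w) (hN : 1 < N)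
    (hγN : (1 / (2 * q)) ^ (log (2 * β) / ((1 + w) * log N)) ≤ γ) :
    β ^ (log (q / p) / log γ) ≤ q / p * N ^ (-(1 + w)) := by
  have hp0 : 0 < p := by linarith
  set a := -log γ
  set b := -log (2 * β)
  set L := (1 + w) * log N
  set d := log (1 / (2 * q))
  set d₀ := log (p / q)
  have ha : 0 < a := neg_pos.2 (log_neg hγ0 hγ1)
  have ha2 : a ≤ log 2 := by
    have := log_le_log (by norm_num) hγhalf
    rw [one_div, log_inv] at this
    linarith
  have hb : 0 < b := neg_pos.2 (log_neg (by linarith) (by linarith))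
  have hL : 0 < L := mul_pos hw (log_pos hN)
  have hdd₀ : d ≤ d₀ := log_le_log (by positivity) (by
    rw [div_le_div_iff₀ (by positivity) hq0]; nlinarith)
  have hd₀ : 0 ≤ d₀ := log_nonneg ((one_le_div hq0).2 (by linarith))
  have haL : a * L ≤ b * d := by
    have := log_le_log (by positivity) hγN
    rw [log_rpow (by positivity), div_mul_eq_mul_div, div_le_iff₀ hL] at this
    linarith
  have hlogβ : log β = -b - log 2 := by
    rw [show b = -(log 2 + log β) by rw [← log_mul two_ne_zero hβ0.ne']]; ring
  have hqp : log (q / p) = -d₀ := by rw [← log_inv, inv_div]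
  have hs : log (q / p) / log γ = d₀ / a := by
    rw [hqp, show log γ = -a by simp [a], neg_div_neg_eq]
  have hkey : log β * (d₀ / a) ≤ log (q / p) + log N * (-(1 + w)) := by
    rw [hlogβ, hqp, mul_div_assoc', div_le_iff₀ ha]
    nlinarith [mul_le_mul_of_nonneg_left hdd₀ hb.le, mul_le_mul_of_nonneg_right ha2 hd₀]
  calc β ^ (log (q / p) / log γ) = exp (log β * (d₀ / a)) := by rw [hs, rpow_def_of_pos hβ0]
    _ ≤ exp (log (q / p) + log N * (-(1 + w))) := exp_le_exp.2 hkey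
    _ = q / p * N ^ (-(1 + w)) := by
        rw [exp_add, exp_log (by positivity), ← rpow_def_of_pos (by linarith)]

lemma div_le_two_mul_sqrt_div {p q : ℝ} (hp : 1 / 2 < p) (hq : q = 1 - p) (hq0 : 0 < q) :
    q / p ≤ 2 * √(p * q) / (1 - 2 * √(p * q)) ^ 2 := by
  set r := √(p * q)
  have hqr : q ≤ r := le_sqrt_of_sq_le (by nlinarith)
  have hr : r < 1 / 2 := (sqrt_lt' (by norm_num)).2 (by nlinarith)
  have hden : 0 < (1 - 2 * r) ^ 2 := by nlinarith
  calc q / p ≤ 2 * q := by rw [div_le_iff₀ (by linarith)]; nlinarith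
    _ ≤ 2 * r := by linarith
    _ ≤ 2 * r / (1 - 2 * r) ^ 2 := by
        have : (1 - 2 * r) ^ 2 ≤ 1 := by nlinarith [sqrt_nonneg (p * q)]
        rw [le_div_iff₀ hden]
        exact mul_le_of_le_one_right (by linarith) this

lemma one_add_mul_mul_rpow_le {γ p q β w N : ℝ} (hγ0 : 0 < γ) (hγ1 : γ < 1)
    (hγhalf : 1 / 2 ≤ γ) (hp : 1 / 2 < p) (hq : q = 1 - p) (hq0 : 0 < q) (hβ0 : 0 < β)
    (hβ : β < 1 / 2) (hw : 0 < 1 + w) (hN : 1 < N)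
    (hγN : (1 / (2 * q)) ^ (log (2 * β) / ((1 + w) * log N)) ≤ γ) :
    (1 + N * (p / q)) * β ^ (log (q / p) / log γ) ≤
      N ^ (-w) + 2 * √(p * q) / (1 - 2 * √(p * q)) ^ 2 * N ^ (-(1 + w)) := by
  have hN0 : 0 < N := by linarith
  have hpow : N * N ^ (-(1 + w)) = N ^ (-w) := by
    rw [show -w = 1 + -(1 + w) by ring, rpow_add hN0, rpow_one]
  calc (1 + N * (p / q)) * β ^ (log (q / p) / log γ)
      ≤ (1 + N * (p / q)) * (q / p * N ^ (-(1 + w))) := by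
        gcongr
        exact rpow_log_div_log_le hγ0 hγ1 hγhalf hp.le hq hq0 hβ0 hβ hw hN hγN
    _ = N ^ (-w) + q / p * N ^ (-(1 + w)) := by
        rw [← hpow]; field_simp; ring
    _ ≤ N ^ (-w) + 2 * √(p * q) / (1 - 2 * √(p * q)) ^ 2 * N ^ (-(1 + w)) := by
        have := div_le_two_mul_sqrt_div hp hq hq0
        gcongr

end Numerics

lemma ofReal_one_sub_le_measure_diff {Ω : Type*} [MeasurableSpace Ω] {μ : Measure Ω}
    [IsProbabilityMeasure μ] (S H : Set Ω) :
    ENNReal.ofReal (1 - μ.real Sᶜ - μ.real H) ≤ μ (S \ H) := by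
  refine ENNReal.ofReal_le_of_le_toReal ?_
  have hS : 1 ≤ μ.real S + μ.real Sᶜ := by
    simpa [Set.union_compl_self] using measureReal_union_le (μ := μ) S Sᶜ
  have hSH : μ.real S ≤ μ.real (S \ H) + μ.real H :=
    (measureReal_mono (Set.subset_sdiff_union S H)).trans (measureReal_union_le _ _)
  change _ ≤ μ.real (S \ H)
  linarith

lemma sum_Icc_le_mul_of_lt {oc : ℝ → ℝ} (hoc0 : ∀ a, 0 < a → 0 ≤ oc a)
    (hoc : ∀ a b, 0 < a → a ≤ b → oc b ≤ oc a) {b : ℝ} (hb : 0 < b) {a : ℕ → ℝ} {t n : ℕ}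
    (htn : t ≤ n) (ha : ∀ k ∈ Finset.Icc 1 t, b < a k) :
    ∑ k ∈ Finset.Icc 1 t, oc (a k) ≤ n * oc b := by
  calc ∑ k ∈ Finset.Icc 1 t, oc (a k) ≤ ∑ _k ∈ Finset.Icc 1 t, oc b :=
        Finset.sum_le_sum fun k hk => hoc b (a k) hb (ha k hk).le
    _ = t * oc b := by simp
    _ ≤ n * oc b := by gcongr; exact hoc0 b hb

/-- If `γ ≥ max{1/2, (1/(2q))^{log(2β)/((1+ω) log n)}}` with
`0 < β < 1/2`, then with probability at least `1 − μ(T > n) − n^{−ω} − c·n^{−(1+ω)}`,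
we have `T ≤ n` and `TOC(T) ≤ n·oc(β·ᾱ)`. -/
theorem stmt_11
    {Ω : Type*} [mΩ : MeasurableSpace Ω] (μ : Measure Ω) [IsProbabilityMeasure μ]
    (F : Filtration ℕ mΩ)
    (γ ᾱ p q : ℝ) (hγ0 : 0 < γ) (hγ1 : γ < 1) (hᾱ : 0 < ᾱ)
    (hp : 1/2 < p) (hp1 : p < 1) (hq : q = 1 - p)
    (αmax : ℝ) (j' : ℤ) (hj' : j' ≤ 0) (hαmax : αmax = ᾱ * γ ^ j')
    (A : ℕ → Ω → ℝ) (hadp : Adapted F A) (hpos : ∀ k x, 0 < A k x)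
    (T : Ω → ℕ) (hT : IsStoppingTime F (fun x => (T x : WithTop ℕ)))
    (j : ℤ) (hj : j ≤ 0) (hA0 : ∀ x, A 0 x = ᾱ * γ ^ j)
    (hstep : ∀ k, ∀ᵐ x ∂μ,
      A (k+1) x = γ * A k x ∨ A (k+1) x = min αmax (γ⁻¹ * A k x))
    (hcond : ∀ k, ∀ᵐ x ∂μ, (k < T x ∧ A k x ≤ ᾱ) →
      p ≤ (μ[Set.indicator {x' | A (k+1) x' = min αmax (γ⁻¹ * A k x')}
              (fun _ => (1:ℝ)) | F k]) x)
    (oc : ℝ → ℝ) (hoc0 : ∀ a, 0 < a → 0 ≤ oc a)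
    (hocmono : ∀ a b, 0 < a → a ≤ b → oc b ≤ oc a)
    (n : ℕ) (hn : 2 ≤ n) (w : ℝ) (hw : 0 < w) (β : ℝ) (hβ0 : 0 < β) (hβ : β < 1/2)
    (hγbig : max (1/2) ((1/(2*q)) ^ (Real.log (2*β) / ((1 + w) * Real.log n))) ≤ γ) :
    ENNReal.ofReal (1 - (μ {x | n < T x}).toReal - (n : ℝ) ^ (-w)
        - (2 * Real.sqrt (p*q) / (1 - 2 * Real.sqrt (p*q))^2) * (n : ℝ) ^ (-(1 + w))) ≤
      μ {x | T x ≤ n ∧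
        ∑ k ∈ Finset.Icc 1 (T x), oc (A k x) ≤ (n : ℝ) * oc (β * ᾱ)} := by
  have hq0 : 0 < q := by linarith
  have hlogγ : Real.log γ < 0 := Real.log_neg hγ0 hγ1
  set s := Real.log (q / p) / Real.log γ
  have hγs : γ ^ s = q / p := by
    rw [Real.rpow_def_of_pos hγ0, mul_div_cancel₀ _ hlogγ.ne, Real.exp_log (by positivity)]
  have hs : 0 ≤ s := div_nonneg_of_nonpos
    (Real.log_nonpos (by positivity) ((div_le_one (by linarith)).2 (by linarith))) hlogγ.le
  have hᾱ_le (i : ℤ) (hi : i ≤ 0) : ᾱ ≤ ᾱ * γ ^ i :=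
    le_mul_of_one_le_right hᾱ.le (one_le_zpow_of_nonpos₀ hγ0 hγ1.le hi)
  have h : IsStepSizeProcess μ F γ ᾱ αmax p A T :=
    ⟨hγ0, hγ1, hᾱ, hαmax ▸ hᾱ_le j' hj', hadp, hpos, fun x => hA0 x ▸ hᾱ_le j hj, hstep, hT, hcond⟩
  set H := {x | ∃ k ≤ n, k ≤ T x ∧ A k x ≤ β * ᾱ}
  have hH := h.measureReal_exists_le_le (by linarith) hq hq0 hs hγs hβ0 n
  have hnum := one_add_mul_mul_rpow_le hγ0 hγ1 ((le_max_left _ _).trans hγbig) hp hq hq0 hβ0 hβ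
    (by linarith) (by exact_mod_cast hn) ((le_max_right _ _).trans hγbig)
  have hcompl : {x | T x ≤ n}ᶜ = {x | n < T x} := by ext; simp
  calc _ ≤ ENNReal.ofReal (1 - μ.real {x | T x ≤ n}ᶜ - μ.real H) := by
        rw [hcompl, ← measureReal_def]
        exact ENNReal.ofReal_le_ofReal (by linarith)
    _ ≤ μ ({x | T x ≤ n} \ H) := ofReal_one_sub_le_measure_diff _ _
    _ ≤ _ := by
        refine measure_mono fun x hx => ⟨hx.1, sum_Icc_le_mul_of_lt hoc0 hocmono (by positivity)
          hx.1 fun k hk => not_le.1 fun hle => hx.2 ?_⟩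
        exact ⟨k, (Finset.mem_Icc.1 hk).2.trans hx.1, (Finset.mem_Icc.1 hk).2, hle⟩
end

section
/- Let 1/2 < p < 1, q = 1 − p, γ ∈ (0,1), and s > 0 be such that p·γ^{s} > q. Then there exists a constant C > 0, depending only on p, γ, and s, such that for every integer n ≥ 2, Σ_{l=1}^{n} min{ 1, n·(q/p)^{l} } · γ^{−s·l} ≤ C · (log n) · n^{s·log(1/γ)/log(p/q)}. -/
/-!
Write `α = q/p` and `β = γ^(-s)`, so the `l`-th term is `min 1 (n α^l) β^l`. Split the sum at
`m = ⌈t⌉`, where `n α^t = 1`. Below `m` the terms are `β^l` with `β > 1`, above it they are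
`n (αβ)^l` with `αβ < 1` (this is `pγ^s > q`); both geometric sums are dominated by their
terms at `m`, which are `O(β^t) = O(n^(s log(1/γ)/log(p/q)))`. So the bound holds even without
the factor `log n ≥ log 2`.
-/

open Finset Real

lemma geom_sum_filter_le_le_of_one_lt {β : ℝ} (hβ : 1 < β) (s : Finset ℕ) (m : ℕ) :
    ∑ l ∈ s with l ≤ m, β ^ l ≤ β ^ m * (β / (β - 1)) := by
  have hsub : {l ∈ s | l ≤ m} ⊆ range (m + 1) := fun l hl => by
    simp only [mem_filter] at hl
    exact mem_range.mpr (Nat.lt_succ_of_le hl.2)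
  calc ∑ l ∈ s with l ≤ m, β ^ l
      ≤ ∑ l ∈ range (m + 1), β ^ l :=
        sum_le_sum_of_subset_of_nonneg hsub fun l _ _ => by positivity
    _ = (β ^ (m + 1) - 1) / (β - 1) := geom_sum_eq hβ.ne' _
    _ ≤ β ^ (m + 1) / (β - 1) := div_le_div_of_nonneg_right (by linarith) (by linarith)
    _ = β ^ m * (β / (β - 1)) := by rw [pow_succ, mul_div_assoc]

lemma geom_sum_filter_lt_le_of_lt_one {r : ℝ} (hr0 : 0 ≤ r) (hr1 : r < 1) (s : Finset ℕ) (m : ℕ) :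
    ∑ l ∈ s with m < l, r ^ l ≤ r ^ (m + 1) / (1 - r) := by
  have hsub : {l ∈ s | m < l} ⊆ Ico (m + 1) (s.sup id + 1) := fun l hl => by
    simp only [mem_filter] at hl
    exact mem_Ico.mpr ⟨hl.2, Nat.lt_succ_of_le (le_sup (f := id) hl.1)⟩
  calc ∑ l ∈ s with m < l, r ^ l
      ≤ ∑ l ∈ Ico (m + 1) (s.sup id + 1), r ^ l :=
        sum_le_sum_of_subset_of_nonneg hsub fun l _ _ => by positivity
    _ ≤ r ^ (m + 1) / (1 - r) := geom_sum_Ico_le_of_lt_one hr0 hr1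

theorem sum_min_one_mul_pow_le (s : Finset ℕ) {x α β : ℝ} {m : ℕ} (hx : 0 ≤ x) (hα : 0 ≤ α)
    (hβ : 1 < β) (hαβ : α * β < 1) (hm : x * α ^ m ≤ 1) :
    ∑ l ∈ s, min 1 (x * α ^ l) * β ^ l ≤ β ^ m * (β / (β - 1) + 1 / (1 - α * β)) := by
  have hr0 : 0 ≤ α * β := by positivity
  have hr1 : 0 < 1 - α * β := by linarith
  have hlow : ∑ l ∈ s with l ≤ m, min 1 (x * α ^ l) * β ^ l ≤ β ^ m * (β / (β - 1)) :=
    calc ∑ l ∈ s with l ≤ m, min 1 (x * α ^ l) * β ^ l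
        ≤ ∑ l ∈ s with l ≤ m, β ^ l :=
          sum_le_sum fun l _ => mul_le_of_le_one_left (by positivity) (min_le_left _ _)
      _ ≤ β ^ m * (β / (β - 1)) := geom_sum_filter_le_le_of_one_lt hβ s m
  have hhigh : ∑ l ∈ s with ¬l ≤ m, min 1 (x * α ^ l) * β ^ l ≤ β ^ m * (1 / (1 - α * β)) :=
    calc ∑ l ∈ s with ¬l ≤ m, min 1 (x * α ^ l) * β ^ l
        ≤ ∑ l ∈ s with m < l, x * (α * β) ^ l := by
          simp only [not_le]
          refine sum_le_sum fun l _ => ?_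
          rw [mul_pow, ← mul_assoc]
          gcongr
          exact min_le_right _ _
      _ = x * ∑ l ∈ s with m < l, (α * β) ^ l := (mul_sum _ _ _).symm
      _ ≤ x * ((α * β) ^ (m + 1) / (1 - α * β)) := by
          gcongr; exact geom_sum_filter_lt_le_of_lt_one hr0 (by linarith) s m
      _ ≤ x * ((α * β) ^ m / (1 - α * β)) := by
          gcongr x * (?_ / _)
          exact pow_le_pow_of_le_one hr0 hαβ.le m.le_succ
      _ = (x * α ^ m) * (β ^ m * (1 / (1 - α * β))) := by ring
      _ ≤ β ^ m * (1 / (1 - α * β)) := mul_le_of_le_one_left (by positivity) hm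
  rw [← sum_filter_add_sum_filter_not s (· ≤ m), mul_add]
  exact add_le_add hlow hhigh

lemma rpow_log_div_comm {a x : ℝ} (ha : 0 < a) (hx : 0 < x) (b : ℝ) :
    a ^ (log x / b) = x ^ (log a / b) := by
  rw [rpow_def_of_pos ha, rpow_def_of_pos hx]
  ring_nf

theorem sum_min_one_mul_pow_le_rpow (s : Finset ℕ) {x α β : ℝ} (hx : 1 ≤ x) (hα : 0 < α)
    (hβ : 1 < β) (hαβ : α * β < 1) :
    ∑ l ∈ s, min 1 (x * α ^ l) * β ^ l ≤
      β * (β / (β - 1) + 1 / (1 - α * β)) * x ^ (log β / log α⁻¹) := by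
  have hx0 : 0 < x := one_pos.trans_le hx
  have hα1 : α < 1 := (le_mul_of_one_le_right hα.le hβ.le).trans_lt hαβ
  have hlog : 0 < log α⁻¹ := log_pos (one_lt_inv₀ hα |>.mpr hα1)
  set t := log x / log α⁻¹
  have hαt : x * α ^ t = 1 := by
    rw [rpow_log_div_comm hα hx0, log_inv, div_neg, div_self (log_neg hα hα1).ne, rpow_neg_one,
      mul_inv_cancel₀ hx0.ne']
  have hm : x * α ^ ⌈t⌉₊ ≤ 1 := by
    rw [← hαt, ← rpow_natCast]
    exact mul_le_mul_of_nonneg_left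
      (rpow_le_rpow_of_exponent_ge hα hα1.le (Nat.le_ceil t)) hx0.le
  have hβm : β ^ ⌈t⌉₊ ≤ β * β ^ t := by
    rw [← rpow_natCast, mul_comm, ← rpow_add_one (by positivity)]
    have ht : 0 ≤ t := div_nonneg (log_nonneg hx) hlog.le
    exact rpow_le_rpow_of_exponent_le hβ.le (Nat.ceil_lt_add_one ht).le
  calc ∑ l ∈ s, min 1 (x * α ^ l) * β ^ l
      ≤ β ^ ⌈t⌉₊ * (β / (β - 1) + 1 / (1 - α * β)) :=
        sum_min_one_mul_pow_le s hx0.le hα.le hβ hαβ hm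
    _ ≤ β * β ^ t * (β / (β - 1) + 1 / (1 - α * β)) := by gcongr
    _ = β * (β / (β - 1) + 1 / (1 - α * β)) * x ^ (log β / log α⁻¹) := by
        rw [rpow_log_div_comm (by positivity) hx0]; ring

theorem stmt_12_general
    (p q γ s : ℝ) (hp1 : p < 1) (hq : q = 1 - p)
    (hγ0 : 0 < γ) (hγ1 : γ < 1) (hs : 0 < s) (hpγ : q < p * γ ^ s) :
    ∃ C > 0, ∀ n : ℕ, 2 ≤ n →
      ∑ l ∈ Finset.Icc 1 n, (min 1 ((n : ℝ) * (q/p)^l)) * γ ^ (-(s * (l : ℝ))) ≤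
        C * Real.log n * (n : ℝ) ^ (s * Real.log (1/γ) / Real.log (p/q)) := by
  have hq0 : 0 < q := by linarith
  have hp0 : 0 < p := by nlinarith [rpow_pos_of_pos hγ0 s]
  set β := γ ^ (-s)
  have hβ : 1 < β := one_lt_rpow_of_pos_of_lt_one_of_neg hγ0 hγ1 (neg_neg_of_pos hs)
  have hαβ : q / p * β < 1 := by
    rw [show β = (γ ^ s)⁻¹ from rpow_neg hγ0.le s, ← div_eq_mul_inv, div_lt_one (by positivity),
      div_lt_iff₀ hp0]
    linarith
  set K := β / (β - 1) + 1 / (1 - q / p * β)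
  have hK : 0 < K := by
    have : 0 < β - 1 := by linarith
    have : 0 < 1 - q / p * β := by linarith
    positivity
  refine ⟨β * K / log 2, by positivity, fun n hn => ?_⟩
  set E := s * log (1 / γ) / log (p / q) with hE
  have hterm (l : ℕ) : γ ^ (-(s * (l : ℝ))) = β ^ l := by
    rw [← rpow_natCast, ← rpow_mul hγ0.le, neg_mul]
  have hexp : log β / log (q / p)⁻¹ = E := by
    rw [inv_div, log_rpow hγ0, hE, one_div, log_inv, neg_mul_comm]
  have hlogn : 1 ≤ log n / log 2 :=
    (one_le_div (log_pos one_lt_two)).mpr (log_le_log two_pos (by exact_mod_cast hn))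
  simp only [hterm]
  calc ∑ l ∈ Icc 1 n, min 1 ((n : ℝ) * (q / p) ^ l) * β ^ l
      ≤ β * K * (n : ℝ) ^ E := by
        rw [← hexp]
        exact sum_min_one_mul_pow_le_rpow _ (by exact_mod_cast one_le_two.trans hn)
          (div_pos hq0 hp0) hβ hαβ
    _ ≤ β * K * (n : ℝ) ^ E * (log n / log 2) := le_mul_of_one_le_right (by positivity) hlogn
    _ = β * K / log 2 * log n * (n : ℝ) ^ E := by ring

/-- Deterministic summation bound: if `1/2 < p < 1`, `q = 1 − p`,
`γ ∈ (0,1)`, `s > 0` and `p·γ^s > q`, then there is a constant `C > 0` (depending only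
on `p`, `γ`, `s`) such that for all `n ≥ 2`,
`Σ_{l=1}^{n} min{1, n·(q/p)^l}·γ^{−s·l} ≤ C·(log n)·n^{s·log(1/γ)/log(p/q)}`. -/
theorem stmt_12
    (p q γ s : ℝ) (hp : 1/2 < p) (hp1 : p < 1) (hq : q = 1 - p)
    (hγ0 : 0 < γ) (hγ1 : γ < 1) (hs : 0 < s) (hpγ : q < p * γ ^ s) :
    ∃ C > 0, ∀ n : ℕ, 2 ≤ n →
      ∑ l ∈ Finset.Icc 1 n, (min 1 ((n : ℝ) * (q/p)^l)) * γ ^ (-(s * (l : ℝ))) ≤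
        C * Real.log n * (n : ℝ) ^ (s * Real.log (1/γ) / Real.log (p/q)) :=
  stmt_12_general p q γ s hp1 hq hγ0 hγ1 hs hpγ
end
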